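/- arXiv:math/9805139 — 4 statements merged into one kernel-verified Lean document; each statement's English description precedes it below -/
import Mathlib

section
/- For all integers N ≥ 1 and k ≥ 0, the sum over all partitions λ of k of the product δ_λ(N)·δ_{λ'}(N) equals the binomial coefficient C(N², k), i.e. ∑_{λ ⊢ k} δ_λ(N)·δ_{λ'}(N) = (N² choose k). -/
/-- `cellOf l (i, j)` says that the cell in row `i`, column `j` (both 0-indexed) belongs to
the Young diagram of the partition with parts `l`:  this holds iff the number of parts
strictly greater than `j` exceeds `i`, i.e. iff the `(i+1)`-st largest part is `> j`. -/
def cellOf (l : Multiset ℕ) (p : ℕ × ℕ) : Prop :=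
  p.1 < (l.filter fun m => p.2 < m).card

/-- The number of semistandard Young tableaux with entries in `{1, …, N}` (encoded as `Fin N`)
on the diagram described by the cell predicate `c` : fillings of the cells which weakly
increase along each row and strictly increase down each column. -/
noncomputable def sytCount (N : ℕ) (c : ℕ × ℕ → Prop) : ℕ :=
  Nat.card {f : {p : ℕ × ℕ // c p} → Fin N //
    (∀ a b : {p : ℕ × ℕ // c p}, a.1.1 = b.1.1 → a.1.2 ≤ b.1.2 → f a ≤ f b) ∧
    (∀ a b : {p : ℕ × ℕ // c p}, a.1.2 = b.1.2 → a.1.1 < b.1.1 → f a < f b)}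

namespace RSKProof
open YoungDiagram Finset


/-! ### Basic lemmas on Young diagrams via rowLen -/

instance : DecidableEq YoungDiagram := fun μ ν =>
  decidable_of_iff (μ.cells = ν.cells) ⟨fun h => YoungDiagram.ext h, fun h => by rw [h]⟩

theorem le_iff_rowLen {μ ν : YoungDiagram} : μ ≤ ν ↔ ∀ i, μ.rowLen i ≤ ν.rowLen i := by
  constructor
  · intro h i
    rcases Nat.eq_zero_or_pos (μ.rowLen i) with h0 | h0
    · simp [h0]
    · have : (i, μ.rowLen i - 1) ∈ μ := by
        rw [YoungDiagram.mem_iff_lt_rowLen]; omega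
      have := h this
      rw [YoungDiagram.mem_iff_lt_rowLen] at this
      omega
  · intro h p hp
    rw [YoungDiagram.mem_iff_lt_rowLen] at *
    exact lt_of_lt_of_le hp (h _)

theorem ext_rowLen {μ ν : YoungDiagram} (h : ∀ i, μ.rowLen i = ν.rowLen i) : μ = ν :=
  le_antisymm (le_iff_rowLen.2 fun i => (h i).le) (le_iff_rowLen.2 fun i => (h i).ge)

theorem rowLen_eq_of_mem_iff {μ : YoungDiagram} {i m : ℕ}
    (h : ∀ j, (i, j) ∈ μ ↔ j < m) : μ.rowLen i = m := by
  rcases Nat.lt_trichotomy (μ.rowLen i) m with hlt | heq | hgt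
  · have := (h (μ.rowLen i)).2 hlt
    rw [YoungDiagram.mem_iff_lt_rowLen] at this; omega
  · exact heq
  · have : (i, m) ∈ μ := YoungDiagram.mem_iff_lt_rowLen.2 hgt
    rw [h] at this; omega

theorem rowLen_zero_rowLen_le {μ : YoungDiagram} (i : ℕ) : μ.rowLen i ≤ μ.rowLen 0 :=
  μ.rowLen_anti 0 i (Nat.zero_le _)

theorem rowLen_le_card {μ : YoungDiagram} (i : ℕ) : μ.rowLen i ≤ μ.card := by
  calc μ.rowLen i = (μ.row i).card := μ.rowLen_eq_card
    _ ≤ μ.cells.card := Finset.card_le_card (fun p hp => by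
        rw [YoungDiagram.mem_row_iff] at hp; exact hp.1)

theorem colLen_le_card {μ : YoungDiagram} (j : ℕ) : μ.colLen j ≤ μ.card := by
  calc μ.colLen j = (μ.col j).card := μ.colLen_eq_card
    _ ≤ μ.cells.card := Finset.card_le_card (fun p hp => by
        rw [YoungDiagram.mem_col_iff] at hp; exact hp.1)

theorem rowLen_eq_zero_of_card_le {μ : YoungDiagram} {i : ℕ} (h : μ.card ≤ i) :
    μ.rowLen i = 0 := by
  by_contra hne
  have h1 : (i, 0) ∈ μ := YoungDiagram.mem_iff_lt_rowLen.2 (Nat.pos_of_ne_zero hne)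
  rw [YoungDiagram.mem_iff_lt_colLen] at h1
  have := colLen_le_card (μ := μ) 0
  omega

/-- The cells of `μ` all lie in `[0,K) × [0,K)` when `μ.card ≤ K`. -/
theorem mem_lt_of_card_le {μ : YoungDiagram} {K : ℕ} (h : μ.card ≤ K) {p : ℕ × ℕ}
    (hp : p ∈ μ) : p.1 < K ∧ p.2 < K := by
  obtain ⟨i, j⟩ := p
  have h1 := YoungDiagram.mem_iff_lt_rowLen.1 hp
  have h2 := YoungDiagram.mem_iff_lt_colLen.1 hp
  have := rowLen_le_card (μ := μ) i
  have := colLen_le_card (μ := μ) j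
  constructor <;> omega

/-- card as a sum of row lengths. -/
theorem card_eq_sum_rowLen {μ : YoungDiagram} {n : ℕ} (h : μ.rowLen n = 0) :
    μ.card = ∑ i ∈ Finset.range n, μ.rowLen i := by
  have hrows : ∀ i, n ≤ i → μ.rowLen i = 0 := fun i hi =>
    Nat.eq_zero_of_le_zero (h ▸ μ.rowLen_anti n i hi)
  have : μ.cells = (Finset.range n).biUnion (fun i => μ.row i) := by
    ext p
    simp only [Finset.mem_biUnion, Finset.mem_range]
    constructor
    · intro hp
      refine ⟨p.1, ?_, by rw [YoungDiagram.mem_row_iff]; exact ⟨hp, rfl⟩⟩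
      by_contra hn
      push_neg at hn
      have := hrows p.1 hn
      have := YoungDiagram.mem_iff_lt_rowLen.1 (by exact hp : (p.1, p.2) ∈ μ)
      omega
    · rintro ⟨i, _, hp⟩
      exact (YoungDiagram.mem_row_iff.1 hp).1
  rw [YoungDiagram.card, this, Finset.card_biUnion]
  · exact Finset.sum_congr rfl fun i _ => (μ.rowLen_eq_card).symm
  · intro i _ j _ hij
    simp only [Finset.disjoint_left]
    intro p hp hq
    rw [YoungDiagram.mem_row_iff] at hp hq
    exact hij (hp.2 ▸ hq.2)


theorem antitone_of_step {f : ℕ → ℕ} (hf : ∀ i, f (i + 1) ≤ f i) {i j : ℕ} (hij : i ≤ j) :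
    f j ≤ f i := by
  obtain ⟨k, rfl⟩ := Nat.exists_eq_add_of_le hij
  clear hij
  induction k with
  | zero => simp
  | succ k ih => exact le_trans (by simpa [← Nat.add_assoc] using hf (i + k)) ih

/-- Construct a Young diagram from a weakly decreasing, eventually-zero row-length function. -/
def ofRowLenFn (f : ℕ → ℕ) (hf : ∀ i, f (i + 1) ≤ f i) (n : ℕ) (hn : f n = 0) :
    YoungDiagram where
  cells := (Finset.range n ×ˢ Finset.range (f 0)).filter (fun p => p.2 < f p.1)
  isLowerSet := by
    intro p q hq hp
    obtain ⟨hq1, hq2⟩ := hq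
    simp only [Finset.coe_filter, Set.mem_setOf_eq, Finset.mem_product, Finset.mem_range] at *
    obtain ⟨⟨h1, h2⟩, h3⟩ := hp
    have hle : f p.1 ≤ f q.1 := antitone_of_step hf hq1
    refine ⟨⟨?_, ?_⟩, ?_⟩
    · omega
    · have : f q.1 ≤ f 0 := antitone_of_step hf (Nat.zero_le _)
      omega
    · omega

theorem mem_ofRowLenFn {f : ℕ → ℕ} {hf : ∀ i, f (i + 1) ≤ f i} {n : ℕ} {hn : f n = 0}
    {p : ℕ × ℕ} : p ∈ ofRowLenFn f hf n hn ↔ p.2 < f p.1 := by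
  show p ∈ (YoungDiagram.mk _ _).cells ↔ _
  simp only [ofRowLenFn, Finset.mem_filter, Finset.mem_product, Finset.mem_range]
  constructor
  · tauto
  · intro h
    refine ⟨⟨?_, ?_⟩, h⟩
    · by_contra hc
      push_neg at hc
      have := antitone_of_step hf hc
      omega
    · have := antitone_of_step hf (Nat.zero_le p.1)
      omega

theorem rowLen_ofRowLenFn {f : ℕ → ℕ} {hf : ∀ i, f (i + 1) ≤ f i} {n : ℕ} {hn : f n = 0}
    (i : ℕ) : (ofRowLenFn f hf n hn).rowLen i = f i :=
  rowLen_eq_of_mem_iff fun j => mem_ofRowLenFn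


/-! ### Horizontal and vertical strips -/

/-- `μ / ν` is a horizontal strip (at most one cell per column), including `ν ≤ μ`. -/
def HS (ν μ : YoungDiagram) : Prop :=
  ν ≤ μ ∧ ∀ i j : ℕ, (i + 1, j) ∈ μ → (i, j) ∈ ν

/-- `μ / ν` is a vertical strip (at most one cell per row), including `ν ≤ μ`. -/
def VS (ν μ : YoungDiagram) : Prop :=
  ν ≤ μ ∧ ∀ i j : ℕ, (i, j + 1) ∈ μ → (i, j) ∈ ν

theorem hs_iff {ν μ : YoungDiagram} :
    HS ν μ ↔ ∀ i, ν.rowLen i ≤ μ.rowLen i ∧ μ.rowLen (i + 1) ≤ ν.rowLen i := by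
  constructor
  · rintro ⟨h1, h2⟩ i
    refine ⟨le_iff_rowLen.1 h1 i, ?_⟩
    rcases Nat.eq_zero_or_pos (μ.rowLen (i+1)) with h0 | h0
    · omega
    · have : (i + 1, μ.rowLen (i+1) - 1) ∈ μ := by rw [YoungDiagram.mem_iff_lt_rowLen]; omega
      have := h2 _ _ this
      rw [YoungDiagram.mem_iff_lt_rowLen] at this
      omega
  · intro h
    refine ⟨le_iff_rowLen.2 fun i => (h i).1, fun i j hm => ?_⟩
    rw [YoungDiagram.mem_iff_lt_rowLen] at *
    have := (h i).2
    omega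

theorem vs_iff {ν μ : YoungDiagram} :
    VS ν μ ↔ ∀ i, ν.rowLen i ≤ μ.rowLen i ∧ μ.rowLen i ≤ ν.rowLen i + 1 := by
  constructor
  · rintro ⟨h1, h2⟩ i
    refine ⟨le_iff_rowLen.1 h1 i, ?_⟩
    rcases Nat.lt_or_ge (μ.rowLen i) 2 with h0 | h0
    · omega
    · have : (i, μ.rowLen i - 2 + 1) ∈ μ := by rw [YoungDiagram.mem_iff_lt_rowLen]; omega
      have := h2 _ _ this
      rw [YoungDiagram.mem_iff_lt_rowLen] at this
      omega
  · intro h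
    refine ⟨le_iff_rowLen.2 fun i => (h i).1, fun i j hm => ?_⟩
    rw [YoungDiagram.mem_iff_lt_rowLen] at *
    have := (h i).2
    omega

instance (ν μ : YoungDiagram) : Decidable (HS ν μ) := by
  refine decidable_of_iff (ν.cells ⊆ μ.cells ∧ ∀ p ∈ μ.cells, p.1 ≠ 0 → (p.1 - 1, p.2) ∈ ν.cells)
    ⟨fun ⟨h1, h2⟩ => ⟨YoungDiagram.cells_subset_iff.1 h1, fun i j hm => ?_⟩,
     fun ⟨h1, h2⟩ => ⟨YoungDiagram.cells_subset_iff.2 h1, fun p hp hne => ?_⟩⟩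
  · have := h2 (i + 1, j) hm (by omega)
    simpa using this
  · have : p = (p.1 - 1 + 1, p.2) := by
      ext <;> simp <;> omega
    rw [this] at hp
    exact h2 _ _ hp

instance (ν μ : YoungDiagram) : Decidable (VS ν μ) := by
  refine decidable_of_iff (ν.cells ⊆ μ.cells ∧ ∀ p ∈ μ.cells, p.2 ≠ 0 → (p.1, p.2 - 1) ∈ ν.cells)
    ⟨fun ⟨h1, h2⟩ => ⟨YoungDiagram.cells_subset_iff.1 h1, fun i j hm => ?_⟩,
     fun ⟨h1, h2⟩ => ⟨YoungDiagram.cells_subset_iff.2 h1, fun p hp hne => ?_⟩⟩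
  · have := h2 (i, j + 1) hm (by omega)
    simpa using this
  · have : p = (p.1, p.2 - 1 + 1) := by
      ext <;> simp <;> omega
    rw [this] at hp
    exact h2 _ _ hp

theorem hs_transpose {ν μ : YoungDiagram} : HS ν.transpose μ.transpose ↔ VS ν μ := by
  constructor
  · rintro ⟨h1, h2⟩
    refine ⟨by rwa [YoungDiagram.transpose_le_iff] at h1, fun i j hm => ?_⟩
    have := h2 j i (by rw [YoungDiagram.mem_transpose]; exact hm)
    rwa [YoungDiagram.mem_transpose] at this
  · rintro ⟨h1, h2⟩
    refine ⟨YoungDiagram.transpose_le_iff.2 h1, fun i j hm => ?_⟩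
    rw [YoungDiagram.mem_transpose] at *
    exact h2 j i hm

theorem vs_transpose {ν μ : YoungDiagram} : VS ν.transpose μ.transpose ↔ HS ν μ := by
  rw [← hs_transpose]
  simp [YoungDiagram.transpose_transpose]

theorem card_transpose (μ : YoungDiagram) : μ.transpose.card = μ.card := by
  rw [YoungDiagram.card, YoungDiagram.card]
  apply Finset.card_bij (fun p _ => Prod.swap p)
  · intro p hp
    rw [YoungDiagram.mem_cells] at *
    exact YoungDiagram.mem_transpose.1 hp
  · intro p _ q _ h
    exact Prod.swap_injective h
  · intro p hp
    refine ⟨Prod.swap p, ?_, by simp⟩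
    rw [YoungDiagram.mem_cells] at *
    exact YoungDiagram.mem_transpose.2 (by simpa using hp)

/-! ### The diagrams inside a given diagram, as a Finset -/

private def lowerSubsetCond (B : YoungDiagram) (s : Finset (ℕ × ℕ)) : Prop :=
  ∀ p ∈ s, ∀ q ∈ B.cells, q.1 ≤ p.1 → q.2 ≤ p.2 → q ∈ s

private instance (B : YoungDiagram) (s : Finset (ℕ × ℕ)) : Decidable (lowerSubsetCond B s) := by
  unfold lowerSubsetCond; infer_instance

private theorem lowerSubset_isLowerSet {B : YoungDiagram} {s : Finset (ℕ × ℕ)}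
    (hsub : s ⊆ B.cells) (h : lowerSubsetCond B s) : IsLowerSet (s : Set (ℕ × ℕ)) := by
  intro p q hq hp
  have hpB : p ∈ B := hsub hp
  have hqB : q ∈ B := B.up_left_mem hq.1 hq.2 hpB
  exact h p hp q hqB hq.1 hq.2

/-- The finset of all Young diagrams contained in `B`. -/
def diagramsIn (B : YoungDiagram) : Finset YoungDiagram :=
  ((B.cells.powerset.filter (lowerSubsetCond B)).attach).map
    ⟨fun s => ⟨s.1, lowerSubset_isLowerSet
        (Finset.mem_powerset.1 (Finset.mem_filter.1 s.2).1) (Finset.mem_filter.1 s.2).2⟩,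
     by
      intro s t h
      apply Subtype.ext
      exact congrArg YoungDiagram.cells h⟩

theorem mem_diagramsIn {B ν : YoungDiagram} : ν ∈ diagramsIn B ↔ ν ≤ B := by
  constructor
  · rintro h
    simp only [diagramsIn, Finset.mem_map, Finset.mem_attach, true_and] at h
    obtain ⟨s, hs⟩ := h
    have hsub := Finset.mem_powerset.1 (Finset.mem_filter.1 s.2).1
    rw [← hs]
    exact YoungDiagram.cells_subset_iff.1 hsub
  · intro h
    simp only [diagramsIn, Finset.mem_map, Finset.mem_attach, true_and]
    have h1 : ν.cells ∈ B.cells.powerset.filter (lowerSubsetCond B) := by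
      rw [Finset.mem_filter, Finset.mem_powerset]
      refine ⟨YoungDiagram.cells_subset_iff.2 h, fun p hp q _ hq1 hq2 => ?_⟩
      rw [YoungDiagram.mem_cells] at *
      exact ν.up_left_mem hq1 hq2 hp
    exact ⟨⟨ν.cells, h1⟩, by apply YoungDiagram.ext; rfl⟩

/-- A square box diagram. -/
def box (K : ℕ) : YoungDiagram where
  cells := Finset.range K ×ˢ Finset.range K
  isLowerSet := by
    intro p q hq hp
    simp only [Finset.coe_product, Finset.coe_range, Set.mem_prod, Set.mem_Iio] at *
    exact ⟨lt_of_le_of_lt hq.1 hp.1, lt_of_le_of_lt hq.2 hp.2⟩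

theorem mem_box {K : ℕ} {p : ℕ × ℕ} : p ∈ box K ↔ p.1 < K ∧ p.2 < K := by
  show p ∈ (Finset.range K ×ˢ Finset.range K) ↔ _
  simp

theorem le_box {μ : YoungDiagram} {K : ℕ} (h : μ.card ≤ K) : μ ≤ box K := by
  intro p hp
  rw [mem_box]
  exact mem_lt_of_card_le h hp

/-! ### The local rule: setup -/

/-- Compatibility condition for the pair `(σ, τ)`. -/
def Ccond (σ τ : YoungDiagram) : Prop :=
  (∀ i, σ.rowLen i ≤ τ.rowLen i + 1) ∧ (∀ i, τ.rowLen (i + 1) ≤ σ.rowLen i)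

/-- A row bound for everything in sight. -/
def Mbnd (σ τ : YoungDiagram) : ℕ := σ.card + τ.card + 2

def predFx (σ τ : YoungDiagram) (i : ℕ) : Prop :=
  σ.rowLen i ≤ τ.rowLen i ∧ (i = 0 ∨ τ.rowLen i < σ.rowLen (i - 1))

def predFy (σ τ : YoungDiagram) (i : ℕ) : Prop :=
  σ.rowLen i ≤ τ.rowLen i ∧ τ.rowLen (i + 1) < σ.rowLen i

instance (σ τ : YoungDiagram) (i : ℕ) : Decidable (predFx σ τ i) := by
  unfold predFx; infer_instance
instance (σ τ : YoungDiagram) (i : ℕ) : Decidable (predFy σ τ i) := by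
  unfold predFy; infer_instance

def FxF (σ τ : YoungDiagram) : Finset ℕ := (Finset.range (Mbnd σ τ)).filter (predFx σ τ)
def FyF (σ τ : YoungDiagram) : Finset ℕ := (Finset.range (Mbnd σ τ)).filter (predFy σ τ)

def baseA (σ τ : YoungDiagram) : ℕ :=
  ∑ i ∈ Finset.range (Mbnd σ τ), max (σ.rowLen i) (τ.rowLen i)
def baseB (σ τ : YoungDiagram) : ℕ :=
  ∑ i ∈ Finset.range (Mbnd σ τ), min (σ.rowLen i) (τ.rowLen i)

theorem pos_rowLen_lt_card {σ : YoungDiagram} {i : ℕ} (h : 0 < σ.rowLen i) : i < σ.card := by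
  have h1 : (i, 0) ∈ σ := YoungDiagram.mem_iff_lt_rowLen.2 h
  rw [YoungDiagram.mem_iff_lt_colLen] at h1
  exact lt_of_lt_of_le h1 (colLen_le_card 0)

theorem rowLen_sigma_lt {σ τ : YoungDiagram} {i : ℕ} (h : σ.card < i) : σ.rowLen i = 0 :=
  rowLen_eq_zero_of_card_le (le_of_lt h)

theorem card_eq_sum_M_left (σ τ : YoungDiagram) :
    σ.card = ∑ i ∈ Finset.range (Mbnd σ τ), σ.rowLen i :=
  card_eq_sum_rowLen (rowLen_eq_zero_of_card_le (by unfold Mbnd; omega))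

theorem card_eq_sum_M_right (σ τ : YoungDiagram) :
    τ.card = ∑ i ∈ Finset.range (Mbnd σ τ), τ.rowLen i :=
  card_eq_sum_rowLen (rowLen_eq_zero_of_card_le (by unfold Mbnd; omega))

theorem baseA_add_baseB (σ τ : YoungDiagram) : baseA σ τ + baseB σ τ = σ.card + τ.card := by
  rw [card_eq_sum_M_left σ τ, card_eq_sum_M_right σ τ, baseA, baseB, ← Finset.sum_add_distrib,
    ← Finset.sum_add_distrib]
  exact Finset.sum_congr rfl fun i _ => by omega

/-- Rows of `μ` vanish above `σ.card` when `μ/σ` is a horizontal strip. -/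
theorem mu_rows_vanish {σ μ : YoungDiagram} (h : HS σ μ) {i : ℕ} (hi : σ.card + 1 ≤ i) :
    μ.rowLen i = 0 := by
  obtain ⟨j, rfl⟩ : ∃ j, i = j + 1 := ⟨i - 1, by omega⟩
  have h2 := (hs_iff.1 h j).2
  have h3 : σ.rowLen j = 0 := rowLen_eq_zero_of_card_le (by omega)
  omega

/-- Existence of `μ` implies the compatibility condition. -/
theorem ccond_of_mu {σ τ μ : YoungDiagram} (hH : HS σ μ) (hV : VS τ μ) : Ccond σ τ := by
  constructor
  · intro i
    have := (hs_iff.1 hH i).1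
    have := (vs_iff.1 hV i).2
    omega
  · intro i
    have := (hs_iff.1 hH i).2
    have := (vs_iff.1 hV (i + 1)).1
    omega

theorem ccond_of_rho {σ τ ρ : YoungDiagram} (hV : VS ρ σ) (hH : HS ρ τ) : Ccond σ τ := by
  constructor
  · intro i
    have := (vs_iff.1 hV i).2
    have := (hs_iff.1 hH i).1
    omega
  · intro i
    have := (hs_iff.1 hH i).2
    have := (vs_iff.1 hV i).1
    omega

/-- Per-row description of `μ` with `HS σ μ`, `VS τ μ`. -/
theorem mu_row_eq {σ τ μ : YoungDiagram} (hH : HS σ μ) (hV : VS τ μ) (i : ℕ) :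
    μ.rowLen i = max (σ.rowLen i) (τ.rowLen i) +
      (if predFx σ τ i ∧ τ.rowLen i < μ.rowLen i then 1 else 0) := by
  have h1 := (hs_iff.1 hH i).1
  have h2 := (vs_iff.1 hV i).1
  have h3 := (vs_iff.1 hV i).2
  by_cases hcase : predFx σ τ i ∧ τ.rowLen i < μ.rowLen i
  · rw [if_pos hcase]
    obtain ⟨⟨hst, _⟩, hlt⟩ := hcase
    omega
  · simp only [if_neg hcase]
    rcases Nat.lt_or_ge (τ.rowLen i) (σ.rowLen i) with h | h
    · omega
    · -- σ_i ≤ τ_i : show μ_i = τ_i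
      by_contra hne
      have hμ : μ.rowLen i = τ.rowLen i + 1 := by omega
      apply hcase
      refine ⟨⟨h, ?_⟩, by omega⟩
      rcases Nat.eq_zero_or_pos i with rfl | hpos
      · exact Or.inl rfl
      · right
        obtain ⟨j, rfl⟩ : ∃ j, i = j + 1 := ⟨i - 1, by omega⟩
        have := (hs_iff.1 hH j).2
        simp only [Nat.add_sub_cancel]
        omega

theorem mem_FxF {σ τ : YoungDiagram} {i : ℕ} :
    i ∈ FxF σ τ ↔ i < Mbnd σ τ ∧ predFx σ τ i := by
  simp [FxF]

theorem mem_FyF {σ τ : YoungDiagram} {i : ℕ} :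
    i ∈ FyF σ τ ↔ i < Mbnd σ τ ∧ predFy σ τ i := by
  simp [FyF]

theorem card_le_of_le {ρ σ : YoungDiagram} (h : ρ ≤ σ) : ρ.card ≤ σ.card :=
  Finset.card_le_card (YoungDiagram.cells_subset_iff.2 h)

/-- Per-row description of `ρ` with `VS ρ σ`, `HS ρ τ`. -/
theorem rho_row_eq {σ τ ρ : YoungDiagram} (hV : VS ρ σ) (hH : HS ρ τ) (i : ℕ) :
    ρ.rowLen i + (if predFy σ τ i ∧ ρ.rowLen i < σ.rowLen i then 1 else 0) =
      min (σ.rowLen i) (τ.rowLen i) := by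
  have h1 := (vs_iff.1 hV i).1
  have h1' := (vs_iff.1 hV i).2
  have h2 := (hs_iff.1 hH i).1
  have h3 := (hs_iff.1 hH i).2
  by_cases hcase : predFy σ τ i ∧ ρ.rowLen i < σ.rowLen i
  · rw [if_pos hcase]
    obtain ⟨⟨hst, _⟩, hlt⟩ := hcase
    omega
  · rw [if_neg hcase]
    rcases Nat.lt_or_ge (τ.rowLen i) (σ.rowLen i) with h | h
    · omega
    · by_contra _
      have hlt : ρ.rowLen i < σ.rowLen i := by omega
      exact hcase ⟨⟨h, by omega⟩, hlt⟩

theorem mu_card_eq {σ τ μ : YoungDiagram} (hH : HS σ μ) (hV : VS τ μ) :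
    μ.card = baseA σ τ +
      ((Finset.range (Mbnd σ τ)).filter
        (fun i => predFx σ τ i ∧ τ.rowLen i < μ.rowLen i)).card := by
  have hvan : μ.rowLen (Mbnd σ τ) = 0 := mu_rows_vanish hH (by unfold Mbnd; omega)
  rw [card_eq_sum_rowLen hvan, Finset.card_filter, baseA, ← Finset.sum_add_distrib]
  exact Finset.sum_congr rfl fun i _ => mu_row_eq hH hV i

theorem rho_card_eq {σ τ ρ : YoungDiagram} (hV : VS ρ σ) (hH : HS ρ τ) :
    ρ.card + ((Finset.range (Mbnd σ τ)).filter
        (fun i => predFy σ τ i ∧ ρ.rowLen i < σ.rowLen i)).card = baseB σ τ := by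
  have hρσ : ρ.card ≤ σ.card := card_le_of_le hV.1
  have hvan : ρ.rowLen (Mbnd σ τ) = 0 :=
    rowLen_eq_zero_of_card_le (le_trans hρσ (by unfold Mbnd; omega))
  rw [card_eq_sum_rowLen hvan, Finset.card_filter, baseB, ← Finset.sum_add_distrib]
  exact Finset.sum_congr rfl fun i _ => rho_row_eq hV hH i

/-! ### Reverse constructions -/

section Reverse

variable {σ τ : YoungDiagram} {S : Finset ℕ}

theorem muOf_step (hC : Ccond σ τ) (hS : S ⊆ FxF σ τ) (i : ℕ) :
    (fun i => max (σ.rowLen i) (τ.rowLen i) + (if i ∈ S then 1 else 0)) (i + 1) ≤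
    (fun i => max (σ.rowLen i) (τ.rowLen i) + (if i ∈ S then 1 else 0)) i := by
  simp only
  have hσ := σ.rowLen_anti i (i + 1) (by omega)
  have hτ := τ.rowLen_anti i (i + 1) (by omega)
  have hC2 := hC.2 i
  by_cases h : i + 1 ∈ S
  · rw [if_pos h]
    have hx := (mem_FxF.1 (hS h)).2
    obtain ⟨hx1, hx2⟩ := hx
    rcases hx2 with h0 | h0
    · omega
    · simp only [Nat.add_sub_cancel] at h0
      split <;> omega
  · rw [if_neg h]
    split <;> omega

theorem muOf_vanish (hS : S ⊆ FxF σ τ) :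
    (fun i => max (σ.rowLen i) (τ.rowLen i) + (if i ∈ S then 1 else 0)) (Mbnd σ τ) = 0 := by
  simp only
  have h1 : Mbnd σ τ ∉ S := fun h => by
    have := (mem_FxF.1 (hS h)).1; omega
  rw [if_neg h1]
  have h2 : σ.rowLen (Mbnd σ τ) = 0 := rowLen_eq_zero_of_card_le (by unfold Mbnd; omega)
  have h3 : τ.rowLen (Mbnd σ τ) = 0 := rowLen_eq_zero_of_card_le (by unfold Mbnd; omega)
  omega

/-- The diagram with rows `max σ_i τ_i + [i ∈ S]`. -/
def muOf (σ τ : YoungDiagram) (S : Finset ℕ) (hC : Ccond σ τ) (hS : S ⊆ FxF σ τ) :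
    YoungDiagram :=
  ofRowLenFn (fun i => max (σ.rowLen i) (τ.rowLen i) + (if i ∈ S then 1 else 0))
    (muOf_step hC hS) (Mbnd σ τ) (muOf_vanish hS)

theorem muOf_rowLen (hC : Ccond σ τ) (hS : S ⊆ FxF σ τ) (i : ℕ) :
    (muOf σ τ S hC hS).rowLen i =
      max (σ.rowLen i) (τ.rowLen i) + (if i ∈ S then 1 else 0) :=
  rowLen_ofRowLenFn i

theorem muOf_HS (hC : Ccond σ τ) (hS : S ⊆ FxF σ τ) : HS σ (muOf σ τ S hC hS) := by
  rw [hs_iff]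
  intro i
  rw [muOf_rowLen hC hS, muOf_rowLen hC hS]
  constructor
  · split <;> omega
  · have hC2 := hC.2 i
    have hσ := σ.rowLen_anti i (i + 1) (by omega)
    by_cases h : i + 1 ∈ S
    · rw [if_pos h]
      have hx := (mem_FxF.1 (hS h)).2
      obtain ⟨hx1, hx2⟩ := hx
      rcases hx2 with h0 | h0
      · omega
      · simp only [Nat.add_sub_cancel] at h0
        omega
    · rw [if_neg h]
      omega

theorem muOf_VS (hC : Ccond σ τ) (hS : S ⊆ FxF σ τ) : VS τ (muOf σ τ S hC hS) := by
  rw [vs_iff]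
  intro i
  rw [muOf_rowLen hC hS]
  have hC1 := hC.1 i
  constructor
  · split <;> omega
  · by_cases h : i ∈ S
    · rw [if_pos h]
      have hx := (mem_FxF.1 (hS h)).2
      obtain ⟨hx1, _⟩ := hx
      omega
    · rw [if_neg h]
      omega

theorem rhoOf_step (hC : Ccond σ τ) (hS : S ⊆ FyF σ τ) (i : ℕ) :
    (fun i => min (σ.rowLen i) (τ.rowLen i) - (if i ∈ S then 1 else 0)) (i + 1) ≤
    (fun i => min (σ.rowLen i) (τ.rowLen i) - (if i ∈ S then 1 else 0)) i := by
  simp only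
  have hσ := σ.rowLen_anti i (i + 1) (by omega)
  have hτ := τ.rowLen_anti i (i + 1) (by omega)
  by_cases h : i ∈ S
  · rw [if_pos h]
    have hx := (mem_FyF.1 (hS h)).2
    obtain ⟨hx1, hx2⟩ := hx
    split <;> omega
  · rw [if_neg h]
    split <;> omega

theorem rhoOf_vanish (hS : S ⊆ FyF σ τ) :
    (fun i => min (σ.rowLen i) (τ.rowLen i) - (if i ∈ S then 1 else 0)) (Mbnd σ τ) = 0 := by
  simp only
  have h2 : σ.rowLen (Mbnd σ τ) = 0 := rowLen_eq_zero_of_card_le (by unfold Mbnd; omega)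
  omega

/-- The diagram with rows `min σ_i τ_i - [i ∈ S]`. -/
def rhoOf (σ τ : YoungDiagram) (S : Finset ℕ) (hC : Ccond σ τ) (hS : S ⊆ FyF σ τ) :
    YoungDiagram :=
  ofRowLenFn (fun i => min (σ.rowLen i) (τ.rowLen i) - (if i ∈ S then 1 else 0))
    (rhoOf_step hC hS) (Mbnd σ τ) (rhoOf_vanish hS)

theorem rhoOf_rowLen (hC : Ccond σ τ) (hS : S ⊆ FyF σ τ) (i : ℕ) :
    (rhoOf σ τ S hC hS).rowLen i =
      min (σ.rowLen i) (τ.rowLen i) - (if i ∈ S then 1 else 0) :=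
  rowLen_ofRowLenFn i

theorem rhoOf_VS (hC : Ccond σ τ) (hS : S ⊆ FyF σ τ) : VS (rhoOf σ τ S hC hS) σ := by
  rw [vs_iff]
  intro i
  rw [rhoOf_rowLen hC hS]
  have hC1 := hC.1 i
  constructor
  · split <;> omega
  · by_cases h : i ∈ S
    · rw [if_pos h]
      have hx := (mem_FyF.1 (hS h)).2
      obtain ⟨hx1, hx2⟩ := hx
      omega
    · rw [if_neg h]
      omega

theorem rhoOf_HS (hC : Ccond σ τ) (hS : S ⊆ FyF σ τ) : HS (rhoOf σ τ S hC hS) τ := by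
  rw [hs_iff]
  intro i
  rw [rhoOf_rowLen hC hS]
  have hC2 := hC.2 i
  have hτ := τ.rowLen_anti i (i + 1) (by omega)
  constructor
  · split <;> omega
  · by_cases h : i ∈ S
    · rw [if_pos h]
      have hx := (mem_FyF.1 (hS h)).2
      obtain ⟨hx1, hx2⟩ := hx
      have hS1 : (if i + 1 ∈ S then 1 else 0) ≤ 1 := by split <;> omega
      omega
    · rw [if_neg h]
      have hS1 : (if i + 1 ∈ S then 1 else 0) ≤ 1 := by split <;> omega
      omega

end Reverse

theorem sum_indicator_of_subset {S t : Finset ℕ} (h : S ⊆ t) :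
    ∑ i ∈ t, (if i ∈ S then 1 else 0) = S.card := by
  rw [← Finset.card_filter, Finset.filter_mem_eq_inter, Finset.inter_eq_right.2 h]

theorem FxF_subset_range (σ τ : YoungDiagram) : FxF σ τ ⊆ Finset.range (Mbnd σ τ) :=
  Finset.filter_subset _ _

theorem FyF_subset_range (σ τ : YoungDiagram) : FyF σ τ ⊆ Finset.range (Mbnd σ τ) :=
  Finset.filter_subset _ _

theorem muOf_card {σ τ : YoungDiagram} {S : Finset ℕ} (hC : Ccond σ τ) (hS : S ⊆ FxF σ τ) :
    (muOf σ τ S hC hS).card = baseA σ τ + S.card := by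
  have hvan : (muOf σ τ S hC hS).rowLen (Mbnd σ τ) = 0 := by
    rw [muOf_rowLen hC hS]; exact muOf_vanish hS
  rw [card_eq_sum_rowLen hvan, baseA, ← sum_indicator_of_subset
    (le_trans hS (FxF_subset_range σ τ)), ← Finset.sum_add_distrib]
  exact Finset.sum_congr rfl fun i _ => muOf_rowLen hC hS i

theorem rhoOf_card {σ τ : YoungDiagram} {S : Finset ℕ} (hC : Ccond σ τ) (hS : S ⊆ FyF σ τ) :
    (rhoOf σ τ S hC hS).card + S.card = baseB σ τ := by
  have hvan : (rhoOf σ τ S hC hS).rowLen (Mbnd σ τ) = 0 := by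
    rw [rhoOf_rowLen hC hS]; exact rhoOf_vanish hS
  rw [card_eq_sum_rowLen hvan, baseB, ← sum_indicator_of_subset
    (le_trans hS (FyF_subset_range σ τ)), ← Finset.sum_add_distrib]
  refine Finset.sum_congr rfl fun i _ => ?_
  rw [rhoOf_rowLen hC hS]
  by_cases h : i ∈ S
  · rw [if_pos h]
    have hx := (mem_FyF.1 (hS h)).2
    obtain ⟨hx1, hx2⟩ := hx
    omega
  · rw [if_neg h]
    omega

theorem countA (σ τ : YoungDiagram) (hC : Ccond σ τ) (n K : ℕ) (hK : n ≤ K) :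
    ((diagramsIn (box K)).filter (fun μ => HS σ μ ∧ VS τ μ ∧ μ.card = n)).card =
    ((FxF σ τ).powerset.filter (fun S => baseA σ τ + S.card = n)).card := by
  apply Finset.card_bij (fun μ _ =>
    (Finset.range (Mbnd σ τ)).filter (fun i => predFx σ τ i ∧ τ.rowLen i < μ.rowLen i))
  · -- maps into target
    intro μ hμ
    rw [Finset.mem_filter] at hμ
    obtain ⟨_, hH, hV, hcard⟩ := hμ
    rw [Finset.mem_filter, Finset.mem_powerset]
    constructor
    · intro x hx
      rw [Finset.mem_filter] at hx
      rw [mem_FxF, ← Finset.mem_range]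
      exact ⟨hx.1, hx.2.1⟩
    · rw [← mu_card_eq hH hV]; exact hcard
  · -- injective
    intro μ₁ hμ₁ μ₂ hμ₂ heq
    rw [Finset.mem_filter] at hμ₁ hμ₂
    obtain ⟨_, hH₁, hV₁, _⟩ := hμ₁
    obtain ⟨_, hH₂, hV₂, _⟩ := hμ₂
    apply ext_rowLen
    intro i
    rcases Nat.lt_or_ge i (Mbnd σ τ) with hi | hi
    · have e₁ := mu_row_eq hH₁ hV₁ i
      have e₂ := mu_row_eq hH₂ hV₂ i
      have hmem : (i ∈ (Finset.range (Mbnd σ τ)).filter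
            (fun i => predFx σ τ i ∧ τ.rowLen i < μ₁.rowLen i)) ↔
          (i ∈ (Finset.range (Mbnd σ τ)).filter
            (fun i => predFx σ τ i ∧ τ.rowLen i < μ₂.rowLen i)) := by rw [heq]
      rw [Finset.mem_filter, Finset.mem_filter, Finset.mem_range] at hmem
      by_cases hc₁ : predFx σ τ i ∧ τ.rowLen i < μ₁.rowLen i
      · have hc₂ : predFx σ τ i ∧ τ.rowLen i < μ₂.rowLen i := (hmem.1 ⟨hi, hc₁⟩).2
        rw [e₁, e₂, if_pos hc₁, if_pos hc₂]
      · have hc₂ : ¬(predFx σ τ i ∧ τ.rowLen i < μ₂.rowLen i) := by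
          intro hc₂
          exact hc₁ (hmem.2 ⟨hi, hc₂⟩).2
        rw [e₁, e₂, if_neg hc₁, if_neg hc₂]
    · rw [mu_rows_vanish hH₁ (by unfold Mbnd at hi; omega),
        mu_rows_vanish hH₂ (by unfold Mbnd at hi; omega)]
  · -- surjective
    intro S hS
    rw [Finset.mem_filter, Finset.mem_powerset] at hS
    obtain ⟨hsub, hn⟩ := hS
    have hcard := muOf_card hC hsub
    refine ⟨muOf σ τ S hC hsub, ?_, ?_⟩
    · rw [Finset.mem_filter, mem_diagramsIn]
      exact ⟨le_box (by omega), muOf_HS hC hsub, muOf_VS hC hsub, by omega⟩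
    · ext i
      rw [Finset.mem_filter, Finset.mem_range]
      constructor
      · rintro ⟨hi, hpred, hlt⟩
        rw [muOf_rowLen hC hsub] at hlt
        have : σ.rowLen i ≤ τ.rowLen i := hpred.1
        by_contra hiS
        rw [if_neg hiS] at hlt
        omega
      · intro hiS
        have hx := mem_FxF.1 (hsub hiS)
        refine ⟨hx.1, hx.2, ?_⟩
        rw [muOf_rowLen hC hsub, if_pos hiS]
        have : σ.rowLen i ≤ τ.rowLen i := hx.2.1
        omega

theorem countB (σ τ : YoungDiagram) (hC : Ccond σ τ) (n m K : ℕ) (hK : σ ≤ box K) :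
    ((diagramsIn (box K)).filter (fun ρ => VS ρ σ ∧ HS ρ τ ∧ ρ.card + n = m)).card =
    ((FyF σ τ).powerset.filter (fun S => baseB σ τ + n = m + S.card)).card := by
  apply Finset.card_bij (fun ρ _ =>
    (Finset.range (Mbnd σ τ)).filter (fun i => predFy σ τ i ∧ ρ.rowLen i < σ.rowLen i))
  · intro ρ hρ
    rw [Finset.mem_filter] at hρ
    obtain ⟨_, hV, hH, hcard⟩ := hρ
    rw [Finset.mem_filter, Finset.mem_powerset]
    constructor
    · intro x hx
      rw [Finset.mem_filter] at hx
      rw [mem_FyF, ← Finset.mem_range]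
      exact ⟨hx.1, hx.2.1⟩
    · have := rho_card_eq hV hH
      omega
  · intro ρ₁ hρ₁ ρ₂ hρ₂ heq
    rw [Finset.mem_filter] at hρ₁ hρ₂
    obtain ⟨_, hV₁, hH₁, _⟩ := hρ₁
    obtain ⟨_, hV₂, hH₂, _⟩ := hρ₂
    apply ext_rowLen
    intro i
    rcases Nat.lt_or_ge i (Mbnd σ τ) with hi | hi
    · have e₁ := rho_row_eq hV₁ hH₁ i
      have e₂ := rho_row_eq hV₂ hH₂ i
      have hmem : (i ∈ (Finset.range (Mbnd σ τ)).filter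
            (fun i => predFy σ τ i ∧ ρ₁.rowLen i < σ.rowLen i)) ↔
          (i ∈ (Finset.range (Mbnd σ τ)).filter
            (fun i => predFy σ τ i ∧ ρ₂.rowLen i < σ.rowLen i)) := by rw [heq]
      rw [Finset.mem_filter, Finset.mem_filter, Finset.mem_range] at hmem
      by_cases hc₁ : predFy σ τ i ∧ ρ₁.rowLen i < σ.rowLen i
      · have hc₂ := (hmem.1 ⟨hi, hc₁⟩).2
        rw [if_pos hc₁] at e₁
        rw [if_pos hc₂] at e₂
        omega
      · have hc₂ : ¬(predFy σ τ i ∧ ρ₂.rowLen i < σ.rowLen i) := by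
          intro hc₂
          exact hc₁ (hmem.2 ⟨hi, hc₂⟩).2
        rw [if_neg hc₁] at e₁
        rw [if_neg hc₂] at e₂
        omega
    · have hv₁ : ρ₁.rowLen i = 0 := by
        have := le_iff_rowLen.1 hV₁.1 i
        have : σ.rowLen i = 0 := rowLen_eq_zero_of_card_le (by unfold Mbnd at hi; omega)
        omega
      have hv₂ : ρ₂.rowLen i = 0 := by
        have := le_iff_rowLen.1 hV₂.1 i
        have : σ.rowLen i = 0 := rowLen_eq_zero_of_card_le (by unfold Mbnd at hi; omega)
        omega
      rw [hv₁, hv₂]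
  · intro S hS
    rw [Finset.mem_filter, Finset.mem_powerset] at hS
    obtain ⟨hsub, hr⟩ := hS
    have hcard := rhoOf_card hC hsub
    refine ⟨rhoOf σ τ S hC hsub, ?_, ?_⟩
    · rw [Finset.mem_filter, mem_diagramsIn]
      have hle : rhoOf σ τ S hC hsub ≤ σ := (rhoOf_VS hC hsub).1
      exact ⟨le_trans hle hK, rhoOf_VS hC hsub, rhoOf_HS hC hsub, by omega⟩
    · ext i
      rw [Finset.mem_filter, Finset.mem_range]
      constructor
      · rintro ⟨hi, hpred, hlt⟩
        rw [rhoOf_rowLen hC hsub] at hlt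
        have h1 : σ.rowLen i ≤ τ.rowLen i := hpred.1
        by_contra hiS
        rw [if_neg hiS] at hlt
        omega
      · intro hiS
        have hx := mem_FyF.1 (hsub hiS)
        refine ⟨hx.1, hx.2, ?_⟩
        rw [rhoOf_rowLen hC hsub, if_pos hiS]
        have h1 : σ.rowLen i ≤ τ.rowLen i := hx.2.1
        have h2 := hx.2.2
        omega

/-! ### The key counting fact `|Fx| = |Fy| + 1` -/

section Count

variable (σ τ : YoungDiagram)

private def qq (i : ℕ) : ℤ := if σ.rowLen i ≤ τ.rowLen i then 1 else 0

private def ee (i : ℕ) : ℤ :=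
  if i = 0 then 1 else if τ.rowLen i < σ.rowLen (i - 1) then 1 else 0

private theorem FxF_card_eq :
    ((FxF σ τ).card : ℤ) = ∑ i ∈ Finset.range (Mbnd σ τ), qq σ τ i * ee σ τ i := by
  rw [FxF, Finset.card_filter]
  push_cast
  refine Finset.sum_congr rfl fun i _ => ?_
  unfold predFx qq ee
  by_cases h1 : σ.rowLen i ≤ τ.rowLen i
  · rcases Nat.eq_zero_or_pos i with rfl | hpos
    · simp [h1]
    · have hne : i ≠ 0 := by omega
      by_cases h2 : τ.rowLen i < σ.rowLen (i - 1)
      · simp [h1, h2, hne]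
      · simp [h1, h2, hne]
  · simp [h1]

private theorem FyF_card_eq :
    ((FyF σ τ).card : ℤ) = ∑ i ∈ Finset.range (Mbnd σ τ), qq σ τ i * ee σ τ (i + 1) := by
  rw [FyF, Finset.card_filter]
  push_cast
  refine Finset.sum_congr rfl fun i _ => ?_
  unfold predFy qq ee
  simp only [Nat.succ_ne_zero, if_false, Nat.add_sub_cancel]
  by_cases h1 : σ.rowLen i ≤ τ.rowLen i
  · by_cases h2 : τ.rowLen (i + 1) < σ.rowLen i
    · simp [h1, h2]
    · simp [h1, h2]
  · simp [h1]

private theorem flip (hC : Ccond σ τ) (m : ℕ) :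
    (qq σ τ (m + 1) - qq σ τ m) * (ee σ τ (m + 1) - 1) = 0 := by
  have hC1 := hC.1 m
  have hC1' := hC.1 (m + 1)
  have hσ := σ.rowLen_anti m (m + 1) (by omega)
  have hτ := τ.rowLen_anti m (m + 1) (by omega)
  unfold qq ee
  simp only [Nat.succ_ne_zero, if_false, Nat.add_sub_cancel]
  by_cases h1 : σ.rowLen (m + 1) ≤ τ.rowLen (m + 1) <;> by_cases h2 : σ.rowLen m ≤ τ.rowLen m
  · simp [h1, h2]
  · have h3 : τ.rowLen (m + 1) < σ.rowLen m := by omega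
    simp [h1, h2, h3]
  · have h3 : τ.rowLen (m + 1) < σ.rowLen m := by omega
    simp [h1, h2, h3]
  · simp [h1, h2]

private theorem invariant (hC : Ccond σ τ) (m : ℕ) :
    ∑ i ∈ Finset.range (m + 1), (qq σ τ i * ee σ τ i - qq σ τ i * ee σ τ (i + 1)) =
      qq σ τ m * (1 - ee σ τ (m + 1)) := by
  induction m with
  | zero =>
    rw [Finset.sum_range_one]
    have h0 : ee σ τ 0 = 1 := by simp [ee]
    rw [h0]; ring
  | succ m ih =>
    rw [Finset.sum_range_succ, ih]
    have hflip := flip σ τ hC m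
    linear_combination hflip

theorem FxF_card_eq_FyF_card_add_one (hC : Ccond σ τ) :
    (FxF σ τ).card = (FyF σ τ).card + 1 := by
  have hM : Mbnd σ τ = (Mbnd σ τ - 1) + 1 := by unfold Mbnd; omega
  have key : ((FxF σ τ).card : ℤ) - ((FyF σ τ).card : ℤ) = 1 := by
    rw [FxF_card_eq, FyF_card_eq, ← Finset.sum_sub_distrib, hM, invariant σ τ hC]
    have hq : qq σ τ (Mbnd σ τ - 1) = 1 := by
      unfold qq
      have : σ.rowLen (Mbnd σ τ - 1) = 0 :=
        rowLen_eq_zero_of_card_le (by unfold Mbnd; omega)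
      simp [this]
    have he : ee σ τ (Mbnd σ τ - 1 + 1) = 0 := by
      unfold ee
      have h0 : σ.rowLen (Mbnd σ τ - 1 + 1 - 1) = 0 :=
        rowLen_eq_zero_of_card_le (by unfold Mbnd; omega)
      rw [if_neg (by omega), h0]
      simp
    rw [hq, he]
    ring
  omega

end Count

/-- **The local rule** (one commutation step of dual RSK growth). -/
theorem local_rule (σ τ : YoungDiagram) (n K : ℕ) (hK : n ≤ K) (hσK : σ ≤ box K) :
    ((diagramsIn (box K)).filter (fun μ => HS σ μ ∧ VS τ μ ∧ μ.card = n)).card =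
    ((diagramsIn (box K)).filter
        (fun ρ => VS ρ σ ∧ HS ρ τ ∧ ρ.card + n = σ.card + τ.card)).card +
    ((diagramsIn (box K)).filter
        (fun ρ => VS ρ σ ∧ HS ρ τ ∧ ρ.card + n = σ.card + τ.card + 1)).card := by
  by_cases hC : Ccond σ τ
  · rw [countA σ τ hC n K hK, countB σ τ hC n (σ.card + τ.card) K hσK,
      countB σ τ hC n (σ.card + τ.card + 1) K hσK]
    have hAB := baseA_add_baseB σ τ
    have h1 : ((FyF σ τ).powerset.filter
        (fun S => baseB σ τ + n = σ.card + τ.card + S.card)).card =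
        ((FyF σ τ).powerset.filter (fun S => baseA σ τ + S.card = n)).card := by
      apply Finset.card_bij (fun S _ => S)
      · intro S hS
        rw [Finset.mem_filter] at *
        exact ⟨hS.1, by have := hS.2; omega⟩
      · intro S hS₁ S' hS₂ h
        exact h
      · intro S hS
        rw [Finset.mem_filter] at hS
        exact ⟨S, by rw [Finset.mem_filter]; exact ⟨hS.1, by omega⟩, rfl⟩
    have h2 : ((FyF σ τ).powerset.filter
        (fun S => baseB σ τ + n = σ.card + τ.card + 1 + S.card)).card =
        ((FyF σ τ).powerset.filter (fun S => baseA σ τ + S.card + 1 = n)).card := by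
      apply Finset.card_bij (fun S _ => S)
      · intro S hS
        rw [Finset.mem_filter] at *
        exact ⟨hS.1, by have := hS.2; omega⟩
      · intro S hS₁ S' hS₂ h
        exact h
      · intro S hS
        rw [Finset.mem_filter] at hS
        exact ⟨S, by rw [Finset.mem_filter]; exact ⟨hS.1, by omega⟩, rfl⟩
    rw [h1, h2]
    -- now a pure counting statement about subsets of Fx, Fy
    have hfx := FxF_card_eq_FyF_card_add_one σ τ hC
    rcases Nat.lt_or_ge n (baseA σ τ) with hlt | hge
    · rw [Finset.filter_false_of_mem, Finset.filter_false_of_mem, Finset.filter_false_of_mem]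
      · simp
      · intro S _; omega
      · intro S _; omega
      · intro S _; omega
    · obtain ⟨t, rfl⟩ : ∃ t, n = baseA σ τ + t := ⟨n - baseA σ τ, by omega⟩
      have key : ∀ (X : Finset ℕ) (u : ℕ),
          ((X.powerset).filter (fun S => baseA σ τ + S.card = baseA σ τ + u)).card =
            X.card.choose u := by
        intro X u
        rw [← Finset.card_powersetCard, Finset.powersetCard_eq_filter]
        congr 1
        apply Finset.filter_congr
        intro S _
        constructor
        · intro h; omega
        · intro h; omega
      rw [key (FxF σ τ) t, key (FyF σ τ) t]
      rcases Nat.eq_zero_or_pos t with rfl | ht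
      · rw [Finset.filter_false_of_mem]
        · simp
        · intro S _; omega
      · obtain ⟨u, rfl⟩ : ∃ u, t = u + 1 := ⟨t - 1, by omega⟩
        have key2 : ((FyF σ τ).powerset.filter
            (fun S => baseA σ τ + S.card + 1 = baseA σ τ + (u + 1))).card =
            (FyF σ τ).card.choose u := by
          rw [← Finset.card_powersetCard, Finset.powersetCard_eq_filter]
          congr 1
          apply Finset.filter_congr
          intro S _
          constructor
          · intro h; omega
          · intro h; omega
        rw [key2, hfx, Nat.choose_succ_succ]
        simp only [Nat.succ_eq_add_one]
        omega
  · rw [Finset.filter_false_of_mem, Finset.filter_false_of_mem, Finset.filter_false_of_mem]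
    · simp
    · intro ρ _ h; exact hC (ccond_of_rho h.1 h.2.1)
    · intro ρ _ h; exact hC (ccond_of_rho h.1 h.2.1)
    · intro μ _ h; exact hC (ccond_of_mu h.1 h.2.1)

/-! ### The chain-counting functional `FF` and the commutation lemma -/

/-- `FF b μ` = number of chains `⊥ = ν₀, ν₁, …, ν_b = μ` where each step adds a
horizontal strip;  this is the number of SSYT of shape `μ` with entries in `{0,…,b-1}`. -/
def FF : ℕ → YoungDiagram → ℕ
  | 0, μ => if μ = ⊥ then 1 else 0
  | b + 1, μ => ∑ ν ∈ (diagramsIn μ).filter (fun ν => HS ν μ), FF b ν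

theorem card_eq_zero_iff {μ : YoungDiagram} : μ.card = 0 ↔ μ = ⊥ := by
  constructor
  · intro h
    apply YoungDiagram.ext
    rw [YoungDiagram.cells_bot, ← Finset.card_eq_zero]
    exact h
  · rintro rfl
    simp [YoungDiagram.card]

theorem FF_succ {μ : YoungDiagram} {b : ℕ} (U : Finset YoungDiagram)
    (hU : ∀ ν, HS ν μ → ν ∈ U) :
    FF (b + 1) μ = ∑ ν ∈ U.filter (fun ν => HS ν μ), FF b ν := by
  show ∑ ν ∈ (diagramsIn μ).filter (fun ν => HS ν μ), FF b ν = _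
  apply Finset.sum_congr _ (fun _ _ => rfl)
  ext ν
  rw [Finset.mem_filter, Finset.mem_filter, mem_diagramsIn]
  constructor
  · rintro ⟨_, h⟩; exact ⟨hU ν h, h⟩
  · rintro ⟨_, h⟩; exact ⟨h.1, h⟩

theorem FF_bot (b : ℕ) : FF b ⊥ = 1 := by
  induction b with
  | zero => simp [FF]
  | succ b ih =>
    rw [FF_succ {⊥} (fun ν h => by
      rw [Finset.mem_singleton, ← le_bot_iff]
      exact h.1)]
    rw [Finset.filter_true_of_mem (fun ν hν => ?_), Finset.sum_singleton, ih]
    rw [Finset.mem_singleton] at hν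
    subst hν
    exact ⟨le_refl _, fun i j h => absurd h (YoungDiagram.notMem_bot _)⟩

theorem sum_count_swap (V : Finset YoungDiagram) (g : YoungDiagram → ℕ)
    (p : YoungDiagram → YoungDiagram → Prop) [∀ ν ρ, Decidable (p ν ρ)] :
    ∑ ν ∈ V, (V.filter (fun ρ => p ν ρ)).card * g ν =
      ∑ ρ ∈ V, ∑ ν ∈ V.filter (fun ν => p ν ρ), g ν := by
  have h1 : ∀ ν ∈ V, (V.filter (fun ρ => p ν ρ)).card * g ν =
      ∑ ρ ∈ V, if p ν ρ then g ν else 0 := by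
    intro ν _
    rw [← Finset.sum_filter, Finset.sum_const, smul_eq_mul]
  rw [Finset.sum_congr rfl h1, Finset.sum_comm]
  exact Finset.sum_congr rfl fun ρ _ => (Finset.sum_filter _ _).symm

/-- **Commutation lemma (★)**: summing `FF b` over the vertical-strip extensions of `lam`
with `j` extra boxes gives `C(b,j) · FF b lam`. -/
theorem star (b : ℕ) : ∀ (lam : YoungDiagram) (j K : ℕ), lam.card + j ≤ K →
    (∑ μ ∈ (diagramsIn (box K)).filter (fun μ => VS lam μ ∧ μ.card = lam.card + j), FF b μ)
      = Nat.choose b j * FF b lam := by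
  induction b with
  | zero =>
    intro lam j K _
    have h1 : ∀ μ ∈ (diagramsIn (box K)).filter
        (fun μ => VS lam μ ∧ μ.card = lam.card + j),
        FF 0 μ = if ⊥ = μ then 1 else 0 := by
      intro μ _
      show (if μ = ⊥ then 1 else 0) = _
      by_cases h : μ = ⊥
      · simp [h]
      · rw [if_neg h, if_neg (fun hh => h hh.symm)]
    rw [Finset.sum_congr rfl h1, Finset.sum_ite_eq]
    by_cases h : (⊥ : YoungDiagram) ∈ (diagramsIn (box K)).filter
        (fun μ => VS lam μ ∧ μ.card = lam.card + j)
    · rw [if_pos h]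
      rw [Finset.mem_filter] at h
      have hlam : lam = ⊥ := le_bot_iff.1 h.2.1.1
      have hcard : (⊥ : YoungDiagram).card = 0 := card_eq_zero_iff.2 rfl
      have hj : j = 0 := by
        have h3 := h.2.2
        rw [hcard, hlam, hcard] at h3
        omega
      subst hlam hj
      simp [FF]
    · rw [if_neg h]
      by_cases hlam : lam = ⊥
      · subst hlam
        by_cases hj : j = 0
        · exfalso
          apply h
          rw [Finset.mem_filter, mem_diagramsIn]
          refine ⟨bot_le, ⟨le_refl _, fun i j hij => absurd hij (YoungDiagram.notMem_bot _)⟩, ?_⟩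
          rw [hj, card_eq_zero_iff.2 rfl]
        · obtain ⟨j', rfl⟩ : ∃ j', j = j' + 1 := ⟨j - 1, by omega⟩
          simp [FF, Nat.choose]
      · have : FF 0 lam = 0 := by simp [FF, hlam]
        rw [this, Nat.mul_zero]
  | succ b ih =>
    intro lam j K hK
    have hlambox : lam ≤ box K := le_box (by omega)
    have step1 : ∀ μ ∈ (diagramsIn (box K)).filter
        (fun μ => VS lam μ ∧ μ.card = lam.card + j),
        FF (b + 1) μ = ∑ ν ∈ (diagramsIn (box K)).filter (fun ν => HS ν μ), FF b ν := by
      intro μ hμ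
      rw [Finset.mem_filter] at hμ
      exact FF_succ _ (fun ν hh =>
        mem_diagramsIn.2 (le_trans hh.1 (mem_diagramsIn.1 hμ.1)))
    rw [Finset.sum_congr rfl step1, Finset.sum_filter]
    have step2 : ∀ μ ∈ diagramsIn (box K),
        (if (VS lam μ ∧ μ.card = lam.card + j) then
            (∑ ν ∈ (diagramsIn (box K)).filter (fun ν => HS ν μ), FF b ν) else 0) =
        ∑ ν ∈ diagramsIn (box K),
          if (HS ν μ ∧ VS lam μ ∧ μ.card = lam.card + j) then FF b ν else 0 := by
      intro μ _
      by_cases h : VS lam μ ∧ μ.card = lam.card + j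
      · rw [if_pos h, Finset.sum_filter]
        refine Finset.sum_congr rfl fun ν _ => ?_
        by_cases h2 : HS ν μ
        · rw [if_pos h2, if_pos ⟨h2, h⟩]
        · rw [if_neg h2, if_neg (fun hc => h2 hc.1)]
      · rw [if_neg h]
        symm
        apply Finset.sum_eq_zero
        intro ν _
        rw [if_neg (fun hc => h hc.2)]
    rw [Finset.sum_congr rfl step2, Finset.sum_comm]
    have step3 : ∀ ν ∈ diagramsIn (box K),
        (∑ μ ∈ diagramsIn (box K),
          if (HS ν μ ∧ VS lam μ ∧ μ.card = lam.card + j) then FF b ν else 0) =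
        (((diagramsIn (box K)).filter
            (fun ρ => VS ρ ν ∧ HS ρ lam ∧ ρ.card + (lam.card + j) = ν.card + lam.card)).card +
         ((diagramsIn (box K)).filter
            (fun ρ => VS ρ ν ∧ HS ρ lam ∧ ρ.card + (lam.card + j) = ν.card + lam.card + 1)).card)
          * FF b ν := by
      intro ν hν
      rw [← Finset.sum_filter, Finset.sum_const, smul_eq_mul,
        local_rule ν lam (lam.card + j) K hK (mem_diagramsIn.1 hν)]
    rw [Finset.sum_congr rfl step3,
      Finset.sum_congr rfl (fun ν _ => add_mul _ _ (FF b ν)), Finset.sum_add_distrib,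
      sum_count_swap _ (FF b)
        (fun ν ρ => VS ρ ν ∧ HS ρ lam ∧ ρ.card + (lam.card + j) = ν.card + lam.card),
      sum_count_swap _ (FF b)
        (fun ν ρ => VS ρ ν ∧ HS ρ lam ∧ ρ.card + (lam.card + j) = ν.card + lam.card + 1)]
    have hFFsucc : FF (b + 1) lam =
        ∑ ρ ∈ (diagramsIn (box K)).filter (fun ρ => HS ρ lam), FF b ρ :=
      FF_succ _ (fun ρ hh => mem_diagramsIn.2 (le_trans hh.1 hlambox))
    have T1 : (∑ ρ ∈ diagramsIn (box K), ∑ ν ∈ (diagramsIn (box K)).filter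
          (fun ν => VS ρ ν ∧ HS ρ lam ∧ ρ.card + (lam.card + j) = ν.card + lam.card), FF b ν) =
        Nat.choose b j * FF (b + 1) lam := by
      have hper : ∀ ρ ∈ diagramsIn (box K),
          (∑ ν ∈ (diagramsIn (box K)).filter
            (fun ν => VS ρ ν ∧ HS ρ lam ∧ ρ.card + (lam.card + j) = ν.card + lam.card), FF b ν)
          = if HS ρ lam then Nat.choose b j * FF b ρ else 0 := by
        intro ρ _
        by_cases h : HS ρ lam
        · rw [if_pos h]
          have hfix : (diagramsIn (box K)).filter
              (fun ν => VS ρ ν ∧ HS ρ lam ∧ ρ.card + (lam.card + j) = ν.card + lam.card) =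
              (diagramsIn (box K)).filter (fun ν => VS ρ ν ∧ ν.card = ρ.card + j) := by
            apply Finset.filter_congr
            intro ν _
            constructor
            · rintro ⟨h1, _, h3⟩; exact ⟨h1, by omega⟩
            · rintro ⟨h1, h2⟩; exact ⟨h1, h, by omega⟩
          rw [hfix]
          apply ih ρ j K
          have := card_le_of_le h.1
          omega
        · rw [if_neg h]
          apply Finset.sum_eq_zero
          intro ν hν
          rw [Finset.mem_filter] at hν
          exact absurd hν.2.2.1 h
      rw [Finset.sum_congr rfl hper, ← Finset.sum_filter, hFFsucc, Finset.mul_sum]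
    rw [T1]
    rcases j with _ | j'
    · have T2 : (∑ ρ ∈ diagramsIn (box K), ∑ ν ∈ (diagramsIn (box K)).filter
          (fun ν => VS ρ ν ∧ HS ρ lam ∧ ρ.card + (lam.card + 0) = ν.card + lam.card + 1),
            FF b ν) = 0 := by
        apply Finset.sum_eq_zero
        intro ρ _
        apply Finset.sum_eq_zero
        intro ν hν
        rw [Finset.mem_filter] at hν
        obtain ⟨_, h1, _, h3⟩ := hν
        have := card_le_of_le h1.1
        omega
      rw [T2]
      simp
    · have T2 : (∑ ρ ∈ diagramsIn (box K), ∑ ν ∈ (diagramsIn (box K)).filter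
          (fun ν => VS ρ ν ∧ HS ρ lam ∧ ρ.card + (lam.card + (j' + 1)) = ν.card + lam.card + 1),
            FF b ν) = Nat.choose b j' * FF (b + 1) lam := by
        have hper : ∀ ρ ∈ diagramsIn (box K),
            (∑ ν ∈ (diagramsIn (box K)).filter
              (fun ν => VS ρ ν ∧ HS ρ lam ∧
                ρ.card + (lam.card + (j' + 1)) = ν.card + lam.card + 1), FF b ν)
            = if HS ρ lam then Nat.choose b j' * FF b ρ else 0 := by
          intro ρ _
          by_cases h : HS ρ lam
          · rw [if_pos h]
            have hfix : (diagramsIn (box K)).filter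
                (fun ν => VS ρ ν ∧ HS ρ lam ∧
                  ρ.card + (lam.card + (j' + 1)) = ν.card + lam.card + 1) =
                (diagramsIn (box K)).filter (fun ν => VS ρ ν ∧ ν.card = ρ.card + j') := by
              apply Finset.filter_congr
              intro ν _
              constructor
              · rintro ⟨h1, _, h3⟩; exact ⟨h1, by omega⟩
              · rintro ⟨h1, h2⟩; exact ⟨h1, h, by omega⟩
            rw [hfix]
            apply ih ρ j' K
            have := card_le_of_le h.1
            omega
          · rw [if_neg h]
            apply Finset.sum_eq_zero
            intro ν hν
            rw [Finset.mem_filter] at hν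
            exact absurd hν.2.2.1 h
        rw [Finset.sum_congr rfl hper, ← Finset.sum_filter, hFFsucc, Finset.mul_sum]
      rw [T2, Nat.choose_succ_succ, add_mul, Nat.add_comm]

/-! ### The transposed functional and the main recursion -/

def GG (a : ℕ) (lam : YoungDiagram) : ℕ := FF a lam.transpose

theorem transpose_bot : (⊥ : YoungDiagram).transpose = ⊥ := by
  rw [← le_bot_iff]
  intro p hp
  rw [YoungDiagram.mem_transpose] at hp
  exact absurd hp (YoungDiagram.notMem_bot _)

theorem GG_zero (lam : YoungDiagram) : GG 0 lam = if lam = ⊥ then 1 else 0 := by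
  show (if lam.transpose = ⊥ then 1 else 0) = _
  by_cases h : lam = ⊥
  · rw [if_pos h, if_pos (by rw [h, transpose_bot])]
  · rw [if_neg h, if_neg (fun hh => h (by
      rw [← YoungDiagram.transpose_transpose lam, hh, transpose_bot]))]

theorem GG_succ (a : ℕ) (lam : YoungDiagram) (K : ℕ) (hlam : lam ≤ box K) :
    GG (a + 1) lam =
      ∑ μ ∈ (diagramsIn (box K)).filter (fun μ => VS μ lam), GG a μ := by
  show FF (a + 1) lam.transpose = _
  rw [FF_succ (((diagramsIn (box K)).filter (fun μ => VS μ lam)).image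
      YoungDiagram.transpose) (fun ν hh => ?_)]
  · rw [Finset.filter_true_of_mem fun ν hν => ?_]
    · rw [Finset.sum_image fun μ _ μ' _ h => YoungDiagram.transpose_eq_iff.1 h]
      exact Finset.sum_congr rfl fun μ _ => rfl
    · rw [Finset.mem_image] at hν
      obtain ⟨μ, hμ, rfl⟩ := hν
      rw [Finset.mem_filter] at hμ
      exact hs_transpose.2 hμ.2
  · rw [Finset.mem_image]
    refine ⟨ν.transpose, ?_, YoungDiagram.transpose_transpose ν⟩
    rw [Finset.mem_filter, mem_diagramsIn]
    have h1 : VS ν.transpose lam := by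
      rw [← hs_transpose, YoungDiagram.transpose_transpose]
      exact hh
    exact ⟨le_trans h1.1 hlam, h1⟩

def RR (a b k K : ℕ) : ℕ :=
  ∑ lam ∈ (diagramsIn (box K)).filter (fun lam => lam.card = k), FF b lam * GG a lam

theorem RR_zero (b k K : ℕ) : RR 0 b k K = if k = 0 then 1 else 0 := by
  unfold RR
  have h1 : ∀ lam ∈ (diagramsIn (box K)).filter (fun lam => lam.card = k),
      FF b lam * GG 0 lam = if ⊥ = lam then FF b lam else 0 := by
    intro lam _
    rw [GG_zero]
    by_cases h : lam = ⊥
    · rw [if_pos h, if_pos h.symm, Nat.mul_one]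
    · rw [if_neg h, if_neg (fun hh => h hh.symm), Nat.mul_zero]
  rw [Finset.sum_congr rfl h1, Finset.sum_ite_eq]
  by_cases h : (⊥ : YoungDiagram) ∈ (diagramsIn (box K)).filter (fun lam => lam.card = k)
  · rw [if_pos h, FF_bot]
    rw [Finset.mem_filter] at h
    have : k = 0 := by rw [← h.2, card_eq_zero_iff.2 rfl]
    rw [if_pos this]
  · rw [if_neg h]
    have : ¬ k = 0 := by
      intro hk
      apply h
      rw [Finset.mem_filter, mem_diagramsIn]
      exact ⟨bot_le, by rw [card_eq_zero_iff.2 rfl, hk]⟩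
    rw [if_neg this]

theorem card_box (K : ℕ) : (box K).card = K * K := by
  show (Finset.range K ×ˢ Finset.range K).card = K * K
  rw [Finset.card_product, Finset.card_range]

theorem RR_succ (a b k K : ℕ) (hk : k < K) :
    RR (a + 1) b k K = ∑ m ∈ Finset.range (k + 1), Nat.choose b (k - m) * RR a b m K := by
  unfold RR
  have step1 : ∀ lam ∈ (diagramsIn (box K)).filter (fun lam => lam.card = k),
      FF b lam * GG (a + 1) lam =
      ∑ μ ∈ diagramsIn (box K), if VS μ lam then FF b lam * GG a μ else 0 := by
    intro lam hlam
    rw [Finset.mem_filter] at hlam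
    rw [GG_succ a lam K (mem_diagramsIn.1 hlam.1), Finset.mul_sum, Finset.sum_filter]
  rw [Finset.sum_congr rfl step1, Finset.sum_filter]
  have step2 : ∀ lam ∈ diagramsIn (box K),
      (if lam.card = k then
          (∑ μ ∈ diagramsIn (box K), if VS μ lam then FF b lam * GG a μ else 0) else 0) =
      ∑ μ ∈ diagramsIn (box K),
        if lam.card = k then (if VS μ lam then FF b lam * GG a μ else 0) else 0 := by
    intro lam _
    by_cases h : lam.card = k
    · rw [if_pos h]
      exact Finset.sum_congr rfl fun μ _ => by rw [if_pos h]
    · rw [if_neg h]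
      symm
      apply Finset.sum_eq_zero
      intro μ _
      rw [if_neg h]
  rw [Finset.sum_congr rfl step2, Finset.sum_comm]
  -- exchange the ite structure
  have step3 : (∑ μ ∈ diagramsIn (box K), ∑ lam ∈ diagramsIn (box K),
        if lam.card = k then (if VS μ lam then FF b lam * GG a μ else 0) else 0) =
      ∑ μ ∈ diagramsIn (box K),
        if μ.card ≤ k then Nat.choose b (k - μ.card) * (FF b μ * GG a μ) else 0 := by
    refine Finset.sum_congr rfl fun μ hμ => ?_
    by_cases h : μ.card ≤ k
    · have hinner : (∑ lam ∈ diagramsIn (box K),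
          if lam.card = k then (if VS μ lam then FF b lam * GG a μ else 0) else 0) =
          (∑ lam ∈ (diagramsIn (box K)).filter
            (fun lam => VS μ lam ∧ lam.card = μ.card + (k - μ.card)), FF b lam) * GG a μ := by
        rw [Finset.sum_mul, Finset.sum_filter]
        refine Finset.sum_congr rfl fun lam _ => ?_
        by_cases h1 : VS μ lam ∧ lam.card = μ.card + (k - μ.card)
        · have hle : μ.card ≤ lam.card := card_le_of_le h1.1.1
          rw [if_pos h1, if_pos (by omega), if_pos h1.1]
        · by_cases h2 : lam.card = k
          · rw [if_pos h2, if_neg h1]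
            by_cases h3 : VS μ lam
            · exfalso
              have hle : μ.card ≤ lam.card := card_le_of_le h3.1
              exact h1 ⟨h3, by omega⟩
            · rw [if_neg h3]
          · rw [if_neg h2, if_neg h1]
      rw [hinner, if_pos h, star b μ (k - μ.card) K (by omega), Nat.mul_assoc]
    · rw [if_neg h]
      apply Finset.sum_eq_zero
      intro lam _
      by_cases h2 : lam.card = k
      · rw [if_pos h2]
        by_cases h3 : VS μ lam
        · exfalso
          have := card_le_of_le h3.1
          omega
        · rw [if_neg h3]
      · rw [if_neg h2]
  rw [step3]
  -- fiberwise by cardinality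
  have hmaps : ∀ μ ∈ diagramsIn (box K), μ.card ∈ Finset.range (K * K + 1) := by
    intro μ hμ
    rw [Finset.mem_range]
    have h1 := card_le_of_le (mem_diagramsIn.1 hμ)
    rw [card_box] at h1
    omega
  rw [← Finset.sum_fiberwise_of_maps_to hmaps]
  have step4 : ∀ m ∈ Finset.range (K * K + 1),
      (∑ μ ∈ (diagramsIn (box K)).filter (fun μ => μ.card = m),
        if μ.card ≤ k then Nat.choose b (k - μ.card) * (FF b μ * GG a μ) else 0) =
      if m ≤ k then Nat.choose b (k - m) * RR a b m K else 0 := by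
    intro m _
    unfold RR
    rw [Finset.mul_sum]
    by_cases h : m ≤ k
    · rw [if_pos h]
      apply Finset.sum_congr rfl
      intro μ hμ
      rw [Finset.mem_filter] at hμ
      rw [hμ.2, if_pos h]
    · rw [if_neg h]
      apply Finset.sum_eq_zero
      intro μ hμ
      rw [Finset.mem_filter] at hμ
      rw [hμ.2, if_neg h]
  rw [Finset.sum_congr rfl step4]
  rw [← Finset.sum_subset (Finset.range_subset_range.2 (by nlinarith : k + 1 ≤ K * K + 1))
    (fun m _ hm => by
      rw [Finset.mem_range] at hm
      rw [if_neg (by omega)])]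
  refine Finset.sum_congr rfl fun m hm => ?_
  rw [Finset.mem_range] at hm
  rw [if_pos (by omega)]
  rfl

theorem RR_choose (a b k K : ℕ) (hk : k < K) : RR a b k K = Nat.choose (a * b) k := by
  induction a generalizing k with
  | zero =>
    rw [RR_zero, Nat.zero_mul]
    rcases k with _ | k'
    · simp
    · simp [Nat.choose]
  | succ a ih =>
    rw [RR_succ a b k K hk]
    have h1 : ∀ m ∈ Finset.range (k + 1),
        Nat.choose b (k - m) * RR a b m K = Nat.choose b (k - m) * Nat.choose (a * b) m := by
      intro m hm
      rw [Finset.mem_range] at hm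
      rw [ih m (by omega)]
    rw [Finset.sum_congr rfl h1]
    have h2 : (a + 1) * b = b + a * b := by ring
    rw [h2, Nat.add_choose_eq, Finset.Nat.sum_antidiagonal_eq_sum_range_succ_mk]
    rw [← Finset.sum_range_reflect]
    apply Finset.sum_congr rfl
    intro m hm
    rw [Finset.mem_range] at hm
    have e1 : k + 1 - 1 - m = k - m := by omega
    have e2 : k - (k - m) = m := by omega
    simp only [e1, e2]

/-! ### Counting tableaux -/

instance (μ : YoungDiagram) : DecidablePred (· ∈ μ) := fun p =>
  decidable_of_iff (p ∈ μ.cells) (YoungDiagram.mem_cells p)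

instance (μ : YoungDiagram) : Fintype {p : ℕ × ℕ // p ∈ μ} :=
  Fintype.subtype μ.cells (fun p => YoungDiagram.mem_cells p)

/-- The type of semistandard tableaux of shape `μ`, matching `sytCount`'s subtype. -/
def Tab (N : ℕ) (μ : YoungDiagram) :=
  {f : {p : ℕ × ℕ // p ∈ μ} → Fin N //
    (∀ a b : {p : ℕ × ℕ // p ∈ μ}, a.1.1 = b.1.1 → a.1.2 ≤ b.1.2 → f a ≤ f b) ∧
    (∀ a b : {p : ℕ × ℕ // p ∈ μ}, a.1.2 = b.1.2 → a.1.1 < b.1.1 → f a < f b)}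

instance (N : ℕ) (μ : YoungDiagram) : Fintype (Tab N μ) := by
  unfold Tab; infer_instance

theorem tab_le {N : ℕ} {μ : YoungDiagram} {f : {p : ℕ × ℕ // p ∈ μ} → Fin N}
    (hrow : ∀ a b : {p : ℕ × ℕ // p ∈ μ}, a.1.1 = b.1.1 → a.1.2 ≤ b.1.2 → f a ≤ f b)
    (hcol : ∀ a b : {p : ℕ × ℕ // p ∈ μ}, a.1.2 = b.1.2 → a.1.1 < b.1.1 → f a < f b)
    (p q : ℕ × ℕ) (hp : p ∈ μ) (hq : q ∈ μ) (h1 : p.1 ≤ q.1) (h2 : p.2 ≤ q.2) :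
    f ⟨p, hp⟩ ≤ f ⟨q, hq⟩ := by
  have hr : (p.1, q.2) ∈ μ := μ.up_left_mem h1 (le_refl q.2) hq
  have s1 : f ⟨p, hp⟩ ≤ f ⟨(p.1, q.2), hr⟩ := hrow _ _ rfl h2
  rcases Nat.lt_or_ge p.1 q.1 with h | h
  · exact le_trans s1 (le_of_lt (hcol ⟨(p.1, q.2), hr⟩ ⟨q, hq⟩ rfl h))
  · have hpq : p.1 = q.1 := le_antisymm h1 h
    have heq : (⟨(p.1, q.2), hr⟩ : {p : ℕ × ℕ // p ∈ μ}) = ⟨q, hq⟩ :=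
      Subtype.ext (Prod.ext hpq rfl)
    rwa [heq] at s1

/-- The shape of the sub-tableau of entries `< N`. -/
def tabShape {N : ℕ} (μ : YoungDiagram) (t : Tab (N + 1) μ) : YoungDiagram where
  cells := μ.cells.filter (fun p => ∀ h : p ∈ μ, (t.1 ⟨p, h⟩ : ℕ) < N)
  isLowerSet := by
    intro p q hqp hp
    simp only [Finset.coe_filter, Set.mem_setOf_eq, YoungDiagram.mem_cells] at *
    obtain ⟨hpμ, hpv⟩ := hp
    have hqμ : q ∈ μ := μ.up_left_mem hqp.1 hqp.2 hpμ
    refine ⟨hqμ, fun h => ?_⟩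
    have := tab_le t.2.1 t.2.2 q p h hpμ hqp.1 hqp.2
    have h2 := hpv hpμ
    have h3 : (t.1 ⟨q, h⟩ : ℕ) ≤ (t.1 ⟨p, hpμ⟩ : ℕ) := this
    omega

theorem mem_tabShape {N : ℕ} {μ : YoungDiagram} {t : Tab (N + 1) μ} {p : ℕ × ℕ} :
    p ∈ tabShape μ t ↔ p ∈ μ ∧ ∀ h : p ∈ μ, (t.1 ⟨p, h⟩ : ℕ) < N := by
  show p ∈ Finset.filter _ _ ↔ _
  rw [Finset.mem_filter, YoungDiagram.mem_cells]

theorem tabShape_HS {N : ℕ} {μ : YoungDiagram} (t : Tab (N + 1) μ) :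
    HS (tabShape μ t) μ := by
  constructor
  · intro p hp
    exact (mem_tabShape.1 hp).1
  · intro i j hm
    rw [mem_tabShape]
    have hμ : (i, j) ∈ μ := μ.up_left_mem (by omega : i ≤ i + 1) (le_refl j) hm
    refine ⟨hμ, fun h => ?_⟩
    have hlt := t.2.2 ⟨(i, j), h⟩ ⟨(i + 1, j), hm⟩ rfl (by omega : i < i + 1)
    have h2 : (t.1 ⟨(i + 1, j), hm⟩ : ℕ) < N + 1 := (t.1 _).2
    have h3 : (t.1 ⟨(i, j), h⟩ : ℕ) < (t.1 ⟨(i + 1, j), hm⟩ : ℕ) := hlt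
    omega

/-- Fiber of the shape map is equivalent to tableaux on the smaller shape. -/
def fiberEquiv {N : ℕ} (μ ν : YoungDiagram) (hν : HS ν μ) :
    {t : Tab (N + 1) μ // tabShape μ t = ν} ≃ Tab N ν where
  toFun t := by
    refine ⟨fun a => ⟨(t.1.1 ⟨a.1, hν.1 a.2⟩ : ℕ), ?_⟩, ?_, ?_⟩
    · have hmem : a.1 ∈ tabShape μ t.1 := by rw [t.2]; exact a.2
      exact (mem_tabShape.1 hmem).2 (hν.1 a.2)
    · intro a b h1 h2
      exact t.1.2.1 ⟨a.1, hν.1 a.2⟩ ⟨b.1, hν.1 b.2⟩ h1 h2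
    · intro a b h1 h2
      exact t.1.2.2 ⟨a.1, hν.1 a.2⟩ ⟨b.1, hν.1 b.2⟩ h1 h2
  invFun t' := by
    refine ⟨⟨fun a => if h : a.1 ∈ ν then (t'.1 ⟨a.1, h⟩).castSucc else Fin.last N, ?_, ?_⟩, ?_⟩
    · intro a b h1 h2
      beta_reduce
      by_cases hb : b.1 ∈ ν
      · have ha : a.1 ∈ ν := ν.up_left_mem (le_of_eq h1) h2 hb
        rw [dif_pos ha, dif_pos hb, Fin.castSucc_le_castSucc_iff]
        exact t'.2.1 ⟨a.1, ha⟩ ⟨b.1, hb⟩ h1 h2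
      · rw [dif_neg hb]
        exact Fin.le_last _
    · intro a b h1 h2
      beta_reduce
      by_cases hb : b.1 ∈ ν
      · have ha : a.1 ∈ ν := ν.up_left_mem (le_of_lt h2) (le_of_eq h1) hb
        rw [dif_pos ha, dif_pos hb, Fin.castSucc_lt_castSucc_iff]
        exact t'.2.2 ⟨a.1, ha⟩ ⟨b.1, hb⟩ h1 h2
      · rw [dif_neg hb]
        by_cases ha : a.1 ∈ ν
        · rw [dif_pos ha]
          exact Fin.castSucc_lt_last _
        · exfalso
          have hsplit : ((b.1.1 - 1) + 1, b.1.2) ∈ μ := by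
            have : ((b.1.1 - 1) + 1, b.1.2) = b.1 := Prod.ext (by omega) rfl
            rw [this]
            exact b.2
          have hb' : (b.1.1 - 1, b.1.2) ∈ ν := hν.2 _ _ hsplit
          exact ha (ν.up_left_mem (by omega : a.1.1 ≤ b.1.1 - 1) (le_of_eq h1) hb')
    · -- shape is ν
      apply YoungDiagram.ext
      ext p
      rw [YoungDiagram.mem_cells, YoungDiagram.mem_cells]
      refine Iff.trans mem_tabShape ?_
      constructor
      · rintro ⟨hpμ, hpv⟩
        by_contra hpν
        have hx : ((show Fin (N + 1) from
            if h' : p ∈ ν then (t'.1 ⟨p, h'⟩).castSucc else Fin.last N) : ℕ) < N := hpv hpμ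
        rw [dif_neg hpν] at hx
        simp at hx
      · intro hpν
        refine ⟨hν.1 hpν, fun h => ?_⟩
        show ((show Fin (N + 1) from
            if h' : p ∈ ν then (t'.1 ⟨p, h'⟩).castSucc else Fin.last N) : ℕ) < N
        rw [dif_pos hpν]
        exact (t'.1 ⟨p, hpν⟩).2
  left_inv t := by
    apply Subtype.ext
    apply Subtype.ext
    funext a
    apply Fin.ext
    show ((show Fin (N + 1) from
        if h : a.1 ∈ ν then Fin.castSucc _ else Fin.last N) : ℕ) = (t.1.1 a : ℕ)
    by_cases h : a.1 ∈ ν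
    · rw [dif_pos h]
      show (t.1.1 ⟨a.1, hν.1 h⟩ : ℕ) = (t.1.1 a : ℕ)
      congr 1
    · rw [dif_neg h]
      have hns : a.1 ∉ tabShape μ t.1 := by rw [t.2]; exact h
      rw [mem_tabShape] at hns
      push_neg at hns
      obtain ⟨h1, h2⟩ := hns a.2
      have h3 : (t.1.1 a : ℕ) < N + 1 := (t.1.1 a).2
      have h4 : (t.1.1 ⟨a.1, h1⟩ : ℕ) = (t.1.1 a : ℕ) := by congr 1
      show N = _
      omega
  right_inv t' := by
    apply Subtype.ext
    funext a
    apply Fin.ext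
    show ((show Fin (N + 1) from
        if h : a.1 ∈ ν then (t'.1 ⟨a.1, h⟩).castSucc else Fin.last N) : ℕ) = _
    rw [dif_pos a.2]
    rfl

theorem exists_mem_of_ne_bot {μ : YoungDiagram} (h : μ ≠ ⊥) : ∃ p, p ∈ μ := by
  by_contra hc
  push_neg at hc
  apply h
  apply YoungDiagram.ext
  rw [YoungDiagram.cells_bot, Finset.eq_empty_iff_forall_notMem]
  intro p hp
  exact hc p hp

theorem card_tab : ∀ (N : ℕ) (μ : YoungDiagram), Nat.card (Tab N μ) = FF N μ := by
  intro N
  induction N with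
  | zero =>
    intro μ
    by_cases hμ : μ = ⊥
    · subst hμ
      have h0 : FF 0 (⊥ : YoungDiagram) = 1 := by simp [FF]
      rw [h0]
      haveI hie : IsEmpty {p : ℕ × ℕ // p ∈ (⊥ : YoungDiagram)} :=
        ⟨fun a => (YoungDiagram.notMem_bot a.1) a.2⟩
      rw [Nat.card_eq_one_iff_unique]
      constructor
      · exact ⟨fun t s => Subtype.ext (funext fun a => isEmptyElim a)⟩
      · exact ⟨⟨fun a => isEmptyElim a, fun a b _ _ => isEmptyElim a,
          fun a b _ _ => isEmptyElim a⟩⟩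
    · have h0 : FF 0 μ = 0 := by simp [FF, hμ]
      rw [h0]
      obtain ⟨p, hp⟩ := exists_mem_of_ne_bot hμ
      haveI : IsEmpty (Tab 0 μ) := ⟨fun t => Fin.elim0 (t.1 ⟨p, hp⟩)⟩
      exact Nat.card_of_isEmpty
  | succ N ih =>
    intro μ
    rw [Nat.card_eq_fintype_card]
    have hshape : ∀ t : Tab (N + 1) μ,
        tabShape μ t ∈ (diagramsIn μ).filter (fun ν => HS ν μ) := by
      intro t
      rw [Finset.mem_filter, mem_diagramsIn]
      exact ⟨(tabShape_HS t).1, tabShape_HS t⟩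
    have e1 := Equiv.sigmaFiberEquiv
      (fun t : Tab (N + 1) μ =>
        (⟨tabShape μ t, hshape t⟩ : {ν // ν ∈ (diagramsIn μ).filter (fun ν => HS ν μ)}))
    rw [← Fintype.card_congr e1, Fintype.card_sigma]
    have e2 : ∀ ν : {ν // ν ∈ (diagramsIn μ).filter (fun ν => HS ν μ)},
        Fintype.card {t : Tab (N + 1) μ // (⟨tabShape μ t, hshape t⟩ :
          {ν // ν ∈ (diagramsIn μ).filter (fun ν => HS ν μ)}) = ν} = FF N ν.1 := by
      intro ν
      have hν : HS ν.1 μ := (Finset.mem_filter.1 ν.2).2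
      have e3 : {t : Tab (N + 1) μ // (⟨tabShape μ t, hshape t⟩ :
          {ν // ν ∈ (diagramsIn μ).filter (fun ν => HS ν μ)}) = ν} ≃ Tab N ν.1 :=
        (Equiv.subtypeEquivRight (fun t => by
          rw [Subtype.ext_iff])).trans (fiberEquiv μ ν.1 hν)
      rw [Fintype.card_congr e3, ← Nat.card_eq_fintype_card, ih]
    rw [Finset.sum_congr rfl (fun ν _ => e2 ν)]
    rw [Finset.sum_coe_sort ((diagramsIn μ).filter (fun ν => HS ν μ)) (FF N)]
    rfl

theorem sytCount_eq_FF (N : ℕ) (μ : YoungDiagram) :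
    sytCount N (fun p => p ∈ μ) = FF N μ := by
  rw [← card_tab]
  rfl

theorem sytCount_congr {N : ℕ} {c d : ℕ × ℕ → Prop} (h : ∀ p, c p ↔ d p) :
    sytCount N c = sytCount N d := by
  have : c = d := funext fun p => propext (h p)
  rw [this]

/-! ### From partitions to diagrams -/

instance (l : Multiset ℕ) : DecidablePred (cellOf l) := fun p => by
  unfold cellOf; infer_instance

def cnt (l : Multiset ℕ) (j : ℕ) : ℕ := (l.filter (fun m => j < m)).card

theorem cnt_anti (l : Multiset ℕ) {j j' : ℕ} (h : j' ≤ j) : cnt l j ≤ cnt l j' :=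
  Multiset.card_le_card (Multiset.monotone_filter_right l (fun x hx => by omega))

theorem cellOf_iff {l : Multiset ℕ} {p : ℕ × ℕ} : cellOf l p ↔ p.1 < cnt l p.2 := Iff.rfl

theorem multiset_card_le_sum {l : Multiset ℕ} (h : ∀ x ∈ l, 0 < x) : l.card ≤ l.sum := by
  induction l using Multiset.induction with
  | empty => simp
  | cons a s ih =>
    rw [Multiset.card_cons, Multiset.sum_cons]
    have h1 : 0 < a := h a (Multiset.mem_cons_self a s)
    have h2 := ih (fun x hx => h x (Multiset.mem_cons_of_mem hx))
    omega

/-- The Young diagram of a partition (given as a multiset of positive parts). -/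
def toDiagram (l : Multiset ℕ) : YoungDiagram where
  cells := (Finset.range l.sum ×ˢ Finset.range l.sum).filter (cellOf l)
  isLowerSet := by
    intro p q hqp hp
    obtain ⟨hq1, hq2⟩ := hqp
    simp only [Finset.coe_filter, Set.mem_setOf_eq, Finset.mem_product,
      Finset.mem_range] at *
    obtain ⟨⟨h1, h2⟩, h3⟩ := hp
    have h4 : cnt l p.2 ≤ cnt l q.2 := cnt_anti l hq2
    have h5 : cellOf l p := h3
    rw [cellOf_iff] at *
    exact ⟨⟨by omega, by omega⟩, by omega⟩

theorem mem_toDiagram {l : Multiset ℕ} (hpos : ∀ x ∈ l, 0 < x) {p : ℕ × ℕ} :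
    p ∈ toDiagram l ↔ cellOf l p := by
  show p ∈ Finset.filter _ _ ↔ _
  rw [Finset.mem_filter, Finset.mem_product, Finset.mem_range, Finset.mem_range]
  constructor
  · tauto
  · intro h
    have h1 : p.1 < cnt l p.2 := h
    have h2 : cnt l p.2 ≤ l.card := Multiset.card_le_card (Multiset.filter_le _ l)
    have h3 : l.card ≤ l.sum := multiset_card_le_sum hpos
    have h4 : p.2 < l.sum := by
      have h5 : (l.filter (fun m => p.2 < m)) ≠ 0 := by
        intro hc
        rw [cnt, hc] at h1
        simp at h1
      obtain ⟨m, hm⟩ := Multiset.exists_mem_of_ne_zero h5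
      rw [Multiset.mem_filter] at hm
      have := Multiset.single_le_sum (fun y _ => Nat.zero_le y) m hm.1
      omega
    exact ⟨⟨by omega, h4⟩, h⟩

theorem colLen_toDiagram {l : Multiset ℕ} (hpos : ∀ x ∈ l, 0 < x) (j : ℕ) :
    (toDiagram l).colLen j = cnt l j := by
  rw [← YoungDiagram.rowLen_transpose]
  apply rowLen_eq_of_mem_iff
  intro i
  rw [YoungDiagram.mem_transpose]
  show (i, j) ∈ toDiagram l ↔ _
  rw [mem_toDiagram hpos]
  exact cellOf_iff

theorem ext_colLen {μ ν : YoungDiagram} (h : ∀ j, μ.colLen j = ν.colLen j) : μ = ν := by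
  have : μ.transpose = ν.transpose := ext_rowLen (fun i => by
    rw [YoungDiagram.rowLen_transpose, YoungDiagram.rowLen_transpose]
    exact h i)
  rwa [YoungDiagram.transpose_eq_iff] at this

theorem sum_cnt {l : Multiset ℕ} {B : ℕ} (h : ∀ m ∈ l, m ≤ B) :
    ∑ j ∈ Finset.range B, cnt l j = l.sum := by
  induction l using Multiset.induction with
  | empty => simp [cnt]
  | cons a s ih =>
    have hstep : ∀ j, cnt (a ::ₘ s) j = cnt s j + if j < a then 1 else 0 := by
      intro j
      rw [cnt, cnt, Multiset.filter_cons]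
      rw [Multiset.card_add]
      split <;> simp <;> omega
    rw [Finset.sum_congr rfl (fun j _ => hstep j), Finset.sum_add_distrib,
      ih (fun m hm => h m (Multiset.mem_cons_of_mem hm)), Multiset.sum_cons]
    have h2 : ∑ j ∈ Finset.range B, (if j < a then 1 else 0) = a := by
      rw [← Finset.card_filter]
      have h3 : (Finset.range B).filter (fun j => j < a) = Finset.range a := by
        ext j
        rw [Finset.mem_filter, Finset.mem_range, Finset.mem_range]
        have := h a (Multiset.mem_cons_self a s)
        omega
      rw [h3, Finset.card_range]
    omega

theorem card_toDiagram {l : Multiset ℕ} (hpos : ∀ x ∈ l, 0 < x) :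
    (toDiagram l).card = l.sum := by
  rw [← card_transpose]
  have hvan : (toDiagram l).transpose.rowLen (l.sum + 1) = 0 := by
    rw [YoungDiagram.rowLen_transpose, colLen_toDiagram hpos]
    rw [cnt, Multiset.card_eq_zero, Multiset.filter_eq_nil]
    intro m hm
    have := Multiset.single_le_sum (fun y _ => Nat.zero_le y) m hm
    omega
  rw [card_eq_sum_rowLen hvan]
  rw [Finset.sum_congr rfl (fun j _ => by
    rw [YoungDiagram.rowLen_transpose, colLen_toDiagram hpos])]
  exact sum_cnt (fun m hm =>
    le_trans (Multiset.single_le_sum (fun y _ => Nat.zero_le y) m hm) (by omega))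

theorem cnt_succ {l : Multiset ℕ} (v : ℕ) :
    cnt l v = cnt l (v + 1) + l.count (v + 1) := by
  have hsplit : l.filter (fun m => v < m) =
      l.filter (fun m => v + 1 < m) + l.filter (fun m => v + 1 = m) := by
    rw [Multiset.ext]
    intro a
    rw [Multiset.count_add, Multiset.count_filter, Multiset.count_filter,
      Multiset.count_filter]
    split_ifs <;> omega
  rw [cnt, cnt, hsplit, Multiset.card_add, Multiset.count, Multiset.countP_eq_card_filter]

theorem parts_eq_of_cnt_eq {l₁ l₂ : Multiset ℕ} (h₁ : ∀ x ∈ l₁, 0 < x)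
    (h₂ : ∀ x ∈ l₂, 0 < x) (h : ∀ j, cnt l₁ j = cnt l₂ j) : l₁ = l₂ := by
  rw [Multiset.ext]
  intro a
  rcases Nat.eq_zero_or_pos a with rfl | ha
  · rw [Multiset.count_eq_zero_of_notMem (fun hc => by have := h₁ 0 hc; omega),
      Multiset.count_eq_zero_of_notMem (fun hc => by have := h₂ 0 hc; omega)]
  · obtain ⟨v, rfl⟩ : ∃ v, a = v + 1 := ⟨a - 1, by omega⟩
    have e₁ := cnt_succ (l := l₁) v
    have e₂ := cnt_succ (l := l₂) v
    have := h v
    have := h (v + 1)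
    omega

/-- The partition attached to a Young diagram. -/
def toPartition (D : YoungDiagram) (k : ℕ) (hk : D.card = k) : Nat.Partition k where
  parts := (Finset.range (D.colLen 0)).val.map D.rowLen
  parts_pos := by
    intro i hi
    rw [Multiset.mem_map] at hi
    obtain ⟨x, hx, rfl⟩ := hi
    rw [Finset.mem_val, Finset.mem_range] at hx
    rw [← YoungDiagram.mem_iff_lt_colLen, YoungDiagram.mem_iff_lt_rowLen] at hx
    omega
  parts_sum := by
    have : ((Finset.range (D.colLen 0)).val.map D.rowLen).sum =
        ∑ i ∈ Finset.range (D.colLen 0), D.rowLen i := rfl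
    rw [this, ← card_eq_sum_rowLen, hk]
    by_contra hne
    have h1 : (D.colLen 0, 0) ∈ D := YoungDiagram.mem_iff_lt_rowLen.2 (by omega)
    rw [YoungDiagram.mem_iff_lt_colLen] at h1
    omega

theorem cnt_toPartition (D : YoungDiagram) (k : ℕ) (hk : D.card = k) (j : ℕ) :
    cnt (toPartition D k hk).parts j = D.colLen j := by
  show ((((Finset.range (D.colLen 0)).val.map D.rowLen)).filter (fun m => j < m)).card = _
  rw [Multiset.filter_map]
  rw [Multiset.card_map]
  have h1 : Multiset.filter ((fun m => j < m) ∘ D.rowLen) (Finset.range (D.colLen 0)).val =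
      ((Finset.range (D.colLen 0)).filter (fun i => j < D.rowLen i)).val := rfl
  rw [h1]
  have h2 : (Finset.range (D.colLen 0)).filter (fun i => j < D.rowLen i) =
      Finset.range (D.colLen j) := by
    ext i
    rw [Finset.mem_filter, Finset.mem_range, Finset.mem_range,
      ← YoungDiagram.mem_iff_lt_rowLen, YoungDiagram.mem_iff_lt_colLen]
    have := D.colLen_anti 0 j (Nat.zero_le j)
    omega
  rw [h2]
  exact Finset.card_range _

theorem toDiagram_toPartition (D : YoungDiagram) (k : ℕ) (hk : D.card = k) :
    toDiagram (toPartition D k hk).parts = D := by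
  apply ext_colLen
  intro j
  rw [colLen_toDiagram (fun x hx => (toPartition D k hk).parts_pos hx),
    cnt_toPartition]

end RSKProof

/-- For all integers `N ≥ 1` and `k ≥ 0`, the sum over all partitions `λ` of `k` of
`δ_λ(N) · δ_{λ'}(N)` equals the binomial coefficient `C(N², k)`, where `δ_λ(N)` is the number of
semistandard Young tableaux of shape `λ` with entries in `{1,…,N}` and `λ'` is the conjugate
partition (whose diagram is the transpose of the diagram of `λ`). -/
theorem sum_delta_mul_delta_conj_eq_choose (N k : ℕ) (hN : 1 ≤ N) :
    ∑ lam : Nat.Partition k,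
      sytCount N (cellOf lam.parts) * sytCount N (fun p => cellOf lam.parts (p.2, p.1)) =
      (N ^ 2).choose k := by
  have hterm : ∀ lam : Nat.Partition k,
      sytCount N (cellOf lam.parts) * sytCount N (fun p => cellOf lam.parts (p.2, p.1)) =
      RSKProof.FF N (RSKProof.toDiagram lam.parts) *
        RSKProof.GG N (RSKProof.toDiagram lam.parts) := by
    intro lam
    have hpos : ∀ x ∈ lam.parts, 0 < x := fun x hx => lam.parts_pos hx
    have e1 : sytCount N (cellOf lam.parts) =
        sytCount N (fun p => p ∈ RSKProof.toDiagram lam.parts) :=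
      RSKProof.sytCount_congr (fun p => (RSKProof.mem_toDiagram hpos).symm)
    have e2 : sytCount N (fun p => cellOf lam.parts (p.2, p.1)) =
        sytCount N (fun p => p ∈ (RSKProof.toDiagram lam.parts).transpose) :=
      RSKProof.sytCount_congr (fun p => by
        rw [YoungDiagram.mem_transpose, RSKProof.mem_toDiagram hpos]
        rfl)
    rw [e1, e2, RSKProof.sytCount_eq_FF, RSKProof.sytCount_eq_FF]
    rfl
  rw [Finset.sum_congr rfl (fun lam _ => hterm lam)]
  have hsum : (∑ lam : Nat.Partition k,
      RSKProof.FF N (RSKProof.toDiagram lam.parts) *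
        RSKProof.GG N (RSKProof.toDiagram lam.parts)) = RSKProof.RR N N k (k + 1) := by
    unfold RSKProof.RR
    apply Finset.sum_bij (fun (lam : Nat.Partition k) _ => RSKProof.toDiagram lam.parts)
    · intro lam _
      rw [Finset.mem_filter, RSKProof.mem_diagramsIn]
      have hc := RSKProof.card_toDiagram (fun x hx => lam.parts_pos hx)
      rw [lam.parts_sum] at hc
      exact ⟨RSKProof.le_box (by omega), hc⟩
    · intro l₁ _ l₂ _ h
      have hp₁ : ∀ x ∈ l₁.parts, 0 < x := fun x hx => l₁.parts_pos hx
      have hp₂ : ∀ x ∈ l₂.parts, 0 < x := fun x hx => l₂.parts_pos hx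
      ext1
      apply RSKProof.parts_eq_of_cnt_eq hp₁ hp₂
      intro j
      rw [← RSKProof.colLen_toDiagram hp₁ j, ← RSKProof.colLen_toDiagram hp₂ j, h]
    · intro D hD
      rw [Finset.mem_filter] at hD
      exact ⟨RSKProof.toPartition D k hD.2, Finset.mem_univ _,
        RSKProof.toDiagram_toPartition D k hD.2⟩
    · intro lam _
      rfl
  rw [hsum, RSKProof.RR_choose N N k (k + 1) (by omega), pow_two]
end

section
/- The element t = ∑_{w ∈ S_k} T_w·T_{w⁻¹} lies in the center of A, i.e. t·x = x·t for every x ∈ A. -/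
/-- The number of inversions of a permutation `w` of `{0, …, k−1}`:
`ℓ(w) = #{(m,n) : m < n, w(m) > w(n)}`.  This equals the Coxeter length of `w`,
i.e. the minimal number of adjacent transpositions needed to express `w`. -/
def invNum {k : ℕ} (w : Equiv.Perm (Fin k)) : ℕ :=
  (Finset.univ.filter fun p : Fin k × Fin k => p.1 < p.2 ∧ w p.2 < w p.1).card

/-- `s` is one of the adjacent transpositions `s_i = (i, i+1)`. -/
def IsAdjSwap {k : ℕ} (s : Equiv.Perm (Fin k)) : Prop :=
  ∃ (i : ℕ) (h : i + 1 < k), s = Equiv.swap ⟨i, Nat.lt_of_succ_lt h⟩ ⟨i + 1, h⟩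

/-!
Let `τ` be the coefficient of `T 1`. The multiplication rules give `τ (T u * T v) = [u = v⁻¹]`;
the rules for multiplying by `T s` on the right, needed for this, come from
`T u * T v = T (u * v)` whenever `ℓ(u v) = ℓ(u) + ℓ(v)`. Hence `τ` is a symmetric trace form
for which `(T w)` and `(T w⁻¹)` are dual bases. For any such pair of dual bases `b`, `b'`,
expanding `x * b i` in `b` and `b' j * x` in `b'` shows that both `x * ∑ i, b i * b' i` and
`(∑ i, b i * b' i) * x` equal `∑ i, ∑ j, τ (x * b i * b' j) • (b j * b' i)`.
-/

open Equiv Finset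

section Inversions

variable {k : ℕ}

def invSet (w : Perm (Fin k)) : Finset (Fin k × Fin k) :=
  univ.filter fun p => p.1 < p.2 ∧ w p.2 < w p.1

theorem mem_invSet {w : Perm (Fin k)} {p : Fin k × Fin k} :
    p ∈ invSet w ↔ p.1 < p.2 ∧ w p.2 < w p.1 := by
  simp [invSet]

theorem invNum_eq_card_invSet (w : Perm (Fin k)) : invNum w = #(invSet w) := rfl

theorem invNum_one : invNum (1 : Perm (Fin k)) = 0 := by
  rw [invNum, card_eq_zero, filter_eq_empty_iff]
  exact fun _ _ h => lt_asymm h.1 h.2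

theorem invNum_inv (w : Perm (Fin k)) : invNum w⁻¹ = invNum w :=
  card_bij' (fun p _ => (w⁻¹ p.2, w⁻¹ p.1)) (fun p _ => (w p.2, w p.1))
    (fun _ h => by simp_all) (fun _ h => by simp_all)
    (fun _ _ => by simp) (fun _ _ => by simp)

theorem swap_lt_swap_iff_of_val_eq_succ {a b x y : Fin k} (hab : (b : ℕ) = a + 1)
    (h₁ : ¬(x = a ∧ y = b)) (h₂ : ¬(x = b ∧ y = a)) :
    swap a b x < swap a b y ↔ x < y := by
  rw [swap_apply_def, swap_apply_def]
  simp only [Fin.ext_iff, Fin.lt_def] at *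
  split_ifs <;> omega

theorem invNum_swap_mul_of_inv_lt {a b : Fin k} (hab : (b : ℕ) = a + 1) {w : Perm (Fin k)}
    (h : w⁻¹ a < w⁻¹ b) : invNum (swap a b * w) = invNum w + 1 := by
  set m := w⁻¹ a
  set n := w⁻¹ b
  have hm : w m = a := w.apply_symm_apply a
  have hn : w n = b := w.apply_symm_apply b
  have hba : ¬b < a := by simp [Fin.lt_def, hab]
  have hnot : (m, n) ∉ invSet w := by simp [mem_invSet, hm, hn, hba]
  suffices invSet (swap a b * w) = insert (m, n) (invSet w) by
    rw [invNum_eq_card_invSet, this, card_insert_of_notMem hnot, invNum_eq_card_invSet]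
  ext ⟨x, y⟩
  simp only [mem_invSet, mem_insert, Prod.mk.injEq, Perm.mul_apply]
  by_cases hxy : x = m ∧ y = n
  · obtain ⟨rfl, rfl⟩ := hxy
    simp [hm, hn, h, Fin.lt_def, hab]
  · rw [or_iff_right hxy]
    refine and_congr_right fun hlt => swap_lt_swap_iff_of_val_eq_succ hab ?_ ?_
    · rintro ⟨hy, hx⟩
      rw [← hm] at hy
      rw [← hn] at hx
      rw [w.injective hx, w.injective hy] at hlt
      exact lt_asymm h hlt
    · rintro ⟨hy, hx⟩
      exact hxy ⟨w.injective (hx.trans hm.symm), w.injective (hy.trans hn.symm)⟩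

theorem invNum_swap_mul_of_inv_gt {a b : Fin k} (hab : (b : ℕ) = a + 1) {w : Perm (Fin k)}
    (h : w⁻¹ b < w⁻¹ a) : invNum w = invNum (swap a b * w) + 1 := by
  have := invNum_swap_mul_of_inv_lt hab (w := swap a b * w) (by simpa [swap_inv] using h)
  rwa [swap_mul_self_mul] at this

namespace IsAdjSwap

variable {s : Perm (Fin k)} (hs : IsAdjSwap s)
include hs

theorem mul_self : s * s = 1 := by
  obtain ⟨i, h, rfl⟩ := hs
  exact swap_mul_self _ _

theorem inv_eq : s⁻¹ = s :=
  inv_eq_of_mul_eq_one_left hs.mul_self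

theorem mul_mul_cancel_left (w : Perm (Fin k)) : s * (s * w) = w := by
  rw [← mul_assoc, hs.mul_self, one_mul]

theorem mul_mul_cancel_right (w : Perm (Fin k)) : w * s * s = w := by
  rw [mul_assoc, hs.mul_self, mul_one]

theorem invNum_mul (w : Perm (Fin k)) :
    invNum (s * w) = invNum w + 1 ∨ invNum w = invNum (s * w) + 1 := by
  obtain ⟨i, h, rfl⟩ := hs
  have hne : w⁻¹ ⟨i, Nat.lt_of_succ_lt h⟩ ≠ w⁻¹ ⟨i + 1, h⟩ :=
    w⁻¹.injective.ne (by simp [Fin.ext_iff])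
  rcases hne.lt_or_gt with hlt | hgt
  · exact .inl (invNum_swap_mul_of_inv_lt rfl hlt)
  · exact .inr (invNum_swap_mul_of_inv_gt rfl hgt)

theorem invNum_mul_right (w : Perm (Fin k)) :
    invNum (w * s) = invNum w + 1 ∨ invNum w = invNum (w * s) + 1 := by
  simpa only [← invNum_inv w, ← invNum_inv (w * s), mul_inv_rev, hs.inv_eq] using
    hs.invNum_mul w⁻¹

theorem invNum_eq_one : invNum s = 1 := by
  simpa [invNum_one] using (hs.invNum_mul 1).resolve_right (by simp [invNum_one])

end IsAdjSwap

theorem exists_isAdjSwap_invNum_eq_invNum_mul_add_one {w : Perm (Fin k)} (hw : w ≠ 1) :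
    ∃ s, IsAdjSwap s ∧ invNum w = invNum (s * w) + 1 := by
  cases k with
  | zero => exact absurd (Subsingleton.elim w 1) hw
  | succ n =>
    by_contra! hdesc
    have hmono : StrictMono (w⁻¹ : Perm (Fin (n + 1))) := by
      refine Fin.strictMono_iff_lt_succ.2 fun i => ?_
      have hab : (i.succ : ℕ) = i.castSucc + 1 := by simp
      refine (w⁻¹.injective.ne Fin.castSucc_lt_succ.ne).lt_or_gt.resolve_right fun hgt => ?_
      exact hdesc _ ⟨i, by omega, rfl⟩ (invNum_swap_mul_of_inv_gt hab hgt)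
    exact hw (inv_eq_one.1 (Perm.ext fun x => congrFun hmono.eq_id x))

theorem adjSwap_mul_induction {P : Perm (Fin k) → Prop} (one : P 1)
    (mul : ∀ s w, IsAdjSwap s → invNum (s * w) = invNum w + 1 → P w → P (s * w))
    (w : Perm (Fin k)) : P w := by
  obtain ⟨n, hn⟩ : ∃ n, invNum w = n := ⟨_, rfl⟩
  induction n generalizing w with
  | zero =>
    by_cases hw : w = 1
    · exact hw ▸ one
    · obtain ⟨s, -, hs⟩ := exists_isAdjSwap_invNum_eq_invNum_mul_add_one hw
      omega
  | succ n ih =>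
    have hw : w ≠ 1 := by rintro rfl; simp [invNum_one] at hn
    obtain ⟨s, hs, hlen⟩ := exists_isAdjSwap_invNum_eq_invNum_mul_add_one hw
    have := mul s (s * w) hs (by rw [hs.mul_mul_cancel_left]; omega) (ih _ (by omega))
    rwa [hs.mul_mul_cancel_left] at this

theorem invNum_mul_le (u v : Perm (Fin k)) : invNum (u * v) ≤ invNum u + invNum v := by
  induction u using adjSwap_mul_induction generalizing v with
  | one => simp [invNum_one]
  | mul s w hs hlen ih =>
    have := ih v
    rcases hs.invNum_mul (w * v) with h | h <;> rw [mul_assoc] <;> omega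

end Inversions

section DualBases

variable {R A ι : Type*} [CommRing R] [Ring A] [Algebra R A]

theorem map_mul_comm_of_basis (τ : A →ₗ[R] R) (b : Module.Basis ι R A)
    (h : ∀ i j, τ (b i * b j) = τ (b j * b i)) (x y : A) : τ (x * y) = τ (y * x) := by
  have : (LinearMap.mul R A).compr₂ τ = ((LinearMap.mul R A).compr₂ τ).flip :=
    b.ext fun i => b.ext fun j => h i j
  exact LinearMap.congr_fun₂ this x y

theorem Module.Basis.sum_map_mul_smul_of_dual [Fintype ι] [DecidableEq ι]
    (b : Module.Basis ι R A) (b' : ι → A) (τ : A →ₗ[R] R)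
    (h : ∀ i j, τ (b i * b' j) = if i = j then 1 else 0) (x : A) :
    ∑ j, τ (x * b' j) • b j = x := by
  have hcoeff : ∀ j, τ (x * b' j) = b.repr x j := fun j => by
    conv_lhs => rw [← b.sum_repr x]
    simp only [sum_mul, smul_mul_assoc, map_sum, map_smul, h, smul_eq_mul, mul_ite, mul_one,
      mul_zero, sum_ite_eq', mem_univ, if_true]
  simp only [hcoeff, b.sum_repr]

theorem commute_sum_mul_of_dual [Fintype ι] [DecidableEq ι] (τ : A →ₗ[R] R)
    (hτ : ∀ x y, τ (x * y) = τ (y * x)) (b b' : Module.Basis ι R A)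
    (h : ∀ i j, τ (b i * b' j) = if i = j then 1 else 0) (x : A) :
    Commute (∑ i, b i * b' i) x := by
  have h' : ∀ i j, τ (b' i * b j) = if i = j then 1 else 0 := fun i j => by
    rw [hτ, h]
    exact if_congr eq_comm rfl rfl
  calc (∑ j, b j * b' j) * x = ∑ j, ∑ i, τ (x * b i * b' j) • (b j * b' i) := by
        rw [sum_mul]
        refine sum_congr rfl fun j _ => ?_
        conv_lhs => rw [mul_assoc, ← b'.sum_map_mul_smul_of_dual b τ h' (b' j * x)]
        simp only [mul_sum, mul_smul_comm, mul_assoc, hτ (b' j)]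
    _ = ∑ i, ∑ j, τ (x * b i * b' j) • (b j * b' i) := sum_comm
    _ = x * ∑ i, b i * b' i := by
        rw [mul_sum]
        refine sum_congr rfl fun i _ => ?_
        conv_rhs => rw [← mul_assoc, ← b.sum_map_mul_smul_of_dual b' τ h (x * b i)]
        simp only [sum_mul, smul_mul_assoc]

end DualBases

structure IsHeckeBasis {R A : Type*} [CommRing R] [Ring A] [Algebra R A] {k : ℕ} (c : R)
    (T : Module.Basis (Perm (Fin k)) R A) : Prop where
  one : T 1 = 1
  mul_of_lt : ∀ s w, IsAdjSwap s → invNum w < invNum (s * w) → T s * T w = T (s * w)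
  mul_of_gt : ∀ s w, IsAdjSwap s → invNum (s * w) < invNum w →
    T s * T w = c • T w + T (s * w)

namespace IsHeckeBasis

variable {R A : Type*} [CommRing R] [Ring A] [Algebra R A] {k : ℕ} {c : R}
  {T : Module.Basis (Perm (Fin k)) R A} (hT : IsHeckeBasis c T)
include hT

theorem mul_of_invNum_mul_eq_add {u v : Perm (Fin k)}
    (h : invNum (u * v) = invNum u + invNum v) : T u * T v = T (u * v) := by
  induction u using adjSwap_mul_induction generalizing v with
  | one => rw [hT.one, one_mul, one_mul]
  | mul s w hs hlen ih =>
    have hwv : invNum (w * v) = invNum w + invNum v := by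
      have := invNum_mul_le w v
      rcases hs.invNum_mul (w * v) with h' | h' <;> rw [mul_assoc] at h <;> omega
    rw [← hT.mul_of_lt s w hs (by omega), mul_assoc, ih hwv,
      hT.mul_of_lt s _ hs (by rw [← mul_assoc]; omega), mul_assoc]

theorem mul_adjSwap_of_lt {s w : Perm (Fin k)} (hs : IsAdjSwap s)
    (h : invNum (w * s) = invNum w + 1) : T w * T s = T (w * s) :=
  hT.mul_of_invNum_mul_eq_add (by rw [h, hs.invNum_eq_one])

theorem mul_adjSwap_of_gt {s w : Perm (Fin k)} (hs : IsAdjSwap s)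
    (h : invNum w = invNum (w * s) + 1) : T w * T s = c • T w + T (w * s) := by
  have hw : T (w * s) * T s = T w := by
    rw [hT.mul_adjSwap_of_lt hs (by rw [hs.mul_mul_cancel_right]; omega), hs.mul_mul_cancel_right]
  have hss : T s * T s = c • T s + 1 := by
    rw [hT.mul_of_gt s s hs (by simp [hs.mul_self, invNum_one, hs.invNum_eq_one]), hs.mul_self,
      hT.one]
  rw [← hw, mul_assoc, hss, mul_add, mul_one, mul_smul_comm]

theorem coord_one_adjSwap_mul_T {s : Perm (Fin k)} (hs : IsAdjSwap s) (w : Perm (Fin k)) :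
    T.coord 1 (T s * T w) = if w = s then 1 else 0 := by
  have hsw : s * w = 1 ↔ w = s := by rw [mul_eq_one_iff_eq_inv', hs.inv_eq]
  rcases hs.invNum_mul w with h | h
  · have hw : w ≠ s := fun hws => by simp [hws, hs.mul_self, invNum_one] at h
    simp [hT.mul_of_lt s w hs (by omega), Module.Basis.coord_apply, hsw, hw]
  · have hw : w ≠ 1 := by rintro rfl; simp [invNum_one] at h
    simp [hT.mul_of_gt s w hs (by omega), Module.Basis.coord_apply, Finsupp.single_apply, hsw, hw]

theorem coord_one_T_mul_adjSwap {s : Perm (Fin k)} (hs : IsAdjSwap s) (w : Perm (Fin k)) :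
    T.coord 1 (T w * T s) = if w = s then 1 else 0 := by
  have hws : w * s = 1 ↔ w = s := by rw [mul_eq_one_iff_eq_inv, hs.inv_eq]
  rcases hs.invNum_mul_right w with h | h
  · have hw : w ≠ s := fun hws => by simp [hws, hs.mul_self, invNum_one] at h
    simp [hT.mul_adjSwap_of_lt hs h, Module.Basis.coord_apply, hws, hw]
  · have hw : w ≠ 1 := by rintro rfl; simp [invNum_one] at h
    simp [hT.mul_adjSwap_of_gt hs h, Module.Basis.coord_apply, Finsupp.single_apply, hws, hw]

theorem coord_one_adjSwap_mul {s : Perm (Fin k)} (hs : IsAdjSwap s) (x : A) :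
    T.coord 1 (T s * x) = T.coord s x := by
  have : (T.coord 1).comp (LinearMap.mulLeft R (T s)) = T.coord s :=
    T.ext fun w => by simp [hT.coord_one_adjSwap_mul_T hs, Finsupp.single_apply, eq_comm]
  exact LinearMap.congr_fun this x

theorem coord_one_mul_adjSwap {s : Perm (Fin k)} (hs : IsAdjSwap s) (x : A) :
    T.coord 1 (x * T s) = T.coord s x := by
  have : (T.coord 1).comp (LinearMap.mulRight R (T s)) = T.coord s :=
    T.ext fun w => by simp [hT.coord_one_T_mul_adjSwap hs, Finsupp.single_apply, eq_comm]
  exact LinearMap.congr_fun this x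

theorem coord_one_T_mul_T (u v : Perm (Fin k)) :
    T.coord 1 (T u * T v) = if u = v⁻¹ then 1 else 0 := by
  induction u using adjSwap_mul_induction generalizing v with
  | one => simp [hT.one, Module.Basis.coord_apply, Finsupp.single_apply, eq_comm]
  | mul s w hs hlen ih =>
    rw [← hT.mul_of_lt s w hs (by omega), mul_assoc, hT.coord_one_adjSwap_mul hs,
      ← hT.coord_one_mul_adjSwap hs, mul_assoc]
    have hiff : w = (v * s)⁻¹ ↔ s * w = v⁻¹ := by
      rw [mul_inv_rev, hs.inv_eq, ← mul_right_inj s, hs.mul_mul_cancel_left]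
    rcases hs.invNum_mul_right v with h | h
    · rw [hT.mul_adjSwap_of_lt hs h, ih]
      exact if_congr hiff rfl rfl
    · have hw : w ≠ v⁻¹ := fun hwv => by
        have : invNum (s * v⁻¹) = invNum (v * s) := by
          rw [← invNum_inv (v * s), mul_inv_rev, hs.inv_eq]
        rw [hwv, invNum_inv] at hlen
        omega
      rw [hT.mul_adjSwap_of_gt hs h, mul_add, mul_smul_comm, map_add, map_smul, ih, ih,
        if_neg hw, smul_zero, zero_add]
      exact if_congr hiff rfl rfl

theorem coord_one_mul_comm (x y : A) : T.coord 1 (x * y) = T.coord 1 (y * x) := by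
  refine map_mul_comm_of_basis _ T (fun u v => ?_) x y
  rw [hT.coord_one_T_mul_T, hT.coord_one_T_mul_T]
  exact if_congr (inv_eq_iff_eq_inv.symm.trans eq_comm) rfl rfl

end IsHeckeBasis

theorem heckeAlgebra_sum_Tw_Twinv_central_general
    (k : ℕ) (q : ℂ)
    (A : Type) [Ring A] [Algebra ℂ A]
    (T : Module.Basis (Equiv.Perm (Fin k)) ℂ A)
    (hT1 : T 1 = 1)
    (hTlt : ∀ s w : Equiv.Perm (Fin k), IsAdjSwap s → invNum w < invNum (s * w) →
      T s * T w = T (s * w))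
    (hTgt : ∀ s w : Equiv.Perm (Fin k), IsAdjSwap s → invNum (s * w) < invNum w →
      T s * T w = (q - q⁻¹) • T w + T (s * w))
    :
    ∀ x : A, (∑ w : Equiv.Perm (Fin k), T w * T w⁻¹) * x =
      x * (∑ w : Equiv.Perm (Fin k), T w * T w⁻¹) := by
  intro x
  have hT : IsHeckeBasis (q - q⁻¹) T := ⟨hT1, hTlt, hTgt⟩
  have hdual : ∀ u v, T.coord 1 (T u * T.reindex (Equiv.inv _) v) = if u = v then 1 else 0 := by
    simp [hT.coord_one_T_mul_T]
  simpa using (commute_sum_mul_of_dual _ hT.coord_one_mul_comm T _ hdual x).eq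

/-- The element `t = ∑_{w ∈ S_k} T_w · T_{w⁻¹}` lies in the center of the Iwahori–Hecke
algebra `A`. -/
theorem heckeAlgebra_sum_Tw_Twinv_central
    (k : ℕ) (hk : 1 ≤ k) (q : ℂ) (hq : q ≠ 0)
    (A : Type) [Ring A] [Algebra ℂ A]
    (T : Module.Basis (Equiv.Perm (Fin k)) ℂ A)
    (hT1 : T 1 = 1)
    (hTlt : ∀ s w : Equiv.Perm (Fin k), IsAdjSwap s → invNum w < invNum (s * w) →
      T s * T w = T (s * w))
    (hTgt : ∀ s w : Equiv.Perm (Fin k), IsAdjSwap s → invNum (s * w) < invNum w →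
      T s * T w = (q - q⁻¹) • T w + T (s * w))
    :
    ∀ x : A, (∑ w : Equiv.Perm (Fin k), T w * T w⁻¹) * x =
      x * (∑ w : Equiv.Perm (Fin k), T w * T w⁻¹) :=
  heckeAlgebra_sum_Tw_Twinv_central_general k q A T hT1 hTlt hTgt
end

section
/- Assume additionally q² ≠ −1 and set P_± = (q + q⁻¹)⁻¹·(q^{∓1}·I_{N²} ± R̂). Then P₊ and P₋ are complementary orthogonal idempotents: P_±² = P_±, P₊·P₋ = P₋·P₊ = 0, P₊ + P₋ = I_{N²}, and R̂ = q·P₊ − q⁻¹·P₋. -/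
/-- The `N²×N²` R-matrix of type A, with rows indexed by `(a,b)` and columns by `(r,s)`
(0-indexed by `Fin N`):  `R̂^{ab}_{rs} = q^{δ_{ab}} δ_{as} δ_{br} + (q − q⁻¹) h(b−a) δ_{ar} δ_{bs}`,
where `h(x) = 1` for `x > 0` and `h(x) = 0` otherwise. -/
noncomputable def Rhat (N : ℕ) (q : ℂ) : Matrix (Fin N × Fin N) (Fin N × Fin N) ℂ :=
  fun p c =>
    (if p.1 = p.2 then q else 1) * (if p.1 = c.2 then 1 else 0) * (if p.2 = c.1 then 1 else 0) +
      (q - q⁻¹) * (if p.1 < p.2 then 1 else 0) *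
        (if p.1 = c.1 then 1 else 0) * (if p.2 = c.2 then 1 else 0)

lemma Rhat_sq (N : ℕ) (q : ℂ) (hq : q ≠ 0) :
    Rhat N q * Rhat N q = (q - q⁻¹) • Rhat N q + 1 := by
  ext ⟨a, b⟩ ⟨r, s⟩
  simp only [Matrix.mul_apply, Rhat, Fintype.sum_prod_type, Matrix.add_apply, Matrix.smul_apply,
    Matrix.one_apply, smul_eq_mul, Prod.mk.injEq]
  simp only [add_mul, mul_add, ite_mul, mul_ite, mul_one, mul_zero, zero_mul, one_mul,
    Finset.sum_add_distrib, Finset.sum_ite_eq, Finset.sum_ite_eq', Finset.mem_univ, if_true]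
  split_ifs <;> simp_all <;>
    first
      | (exact absurd (lt_of_le_of_lt ‹s ≤ r› ‹r < s›) (lt_irrefl _))
      | (exact absurd (lt_trans ‹s < r› ‹r < s›) (lt_irrefl _))
      | (exact absurd (le_antisymm ‹s ≤ r› ‹r ≤ s›) ‹¬s = r›)
      | (field_simp; try ring)


set_option maxHeartbeats 1000000

/-- For `q² ≠ −1`, the matrices `P_± = (q + q⁻¹)⁻¹ (q^{∓1} I ± R̂)` are complementary orthogonal
idempotents and `R̂ = q·P₊ − q⁻¹·P₋`. -/
theorem Rhat_spectral_projections (N : ℕ) (hN : 1 ≤ N) (q : ℂ) (hq : q ≠ 0)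
    (hq2 : q ^ 2 ≠ -1) :
    let Pp : Matrix (Fin N × Fin N) (Fin N × Fin N) ℂ := (q + q⁻¹)⁻¹ • (q⁻¹ • 1 + Rhat N q)
    let Pm : Matrix (Fin N × Fin N) (Fin N × Fin N) ℂ := (q + q⁻¹)⁻¹ • (q • 1 - Rhat N q)
    Pp * Pp = Pp ∧ Pm * Pm = Pm ∧ Pp * Pm = 0 ∧ Pm * Pp = 0 ∧ Pp + Pm = 1 ∧
      Rhat N q = q • Pp - q⁻¹ • Pm := by
  intro Pp Pm
  have hc : q + q⁻¹ ≠ 0 := by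
    intro h
    apply hq2
    have : q * (q + q⁻¹) = 0 := by rw [h, mul_zero]
    rw [mul_add, mul_inv_cancel₀ hq] at this
    linear_combination this
  have hsq := Rhat_sq N q hq
  set R := Rhat N q with hR
  have expand : ∀ (α β γ δ : ℂ),
      (α • 1 + β • R) * (γ • 1 + δ • R)
        = (α * γ + β * δ) • 1 + (α * δ + β * γ + β * δ * (q - q⁻¹)) • R := by
    intro α β γ δ
    simp only [add_mul, mul_add, Matrix.smul_mul, Matrix.mul_smul, Matrix.one_mul,
      Matrix.mul_one, hsq, smul_add, smul_smul]
    module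
  have h1 : (1 : ℂ) + q ^ 2 ≠ 0 := by
    intro h; apply hq2; linear_combination h
  have h2 : q + q ^ 3 ≠ 0 := by
    intro h; apply h1
    have := mul_eq_zero.mp (show q * (1 + q ^ 2) = 0 by linear_combination h)
    tauto
  have e1 : (q + q⁻¹)⁻¹ * q⁻¹ = (1 + q ^ 2)⁻¹ := by
    rw [← mul_inv]
    congr 1
    field_simp
    ring
  have e2 : (q + q⁻¹)⁻¹ = q * (1 + q ^ 2)⁻¹ := by
    rw [show q * (1 + q ^ 2)⁻¹ = ((1 + q ^ 2) * q⁻¹)⁻¹ by rw [mul_inv, inv_inv]; exact mul_comm _ _]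
    congr 1
    field_simp
    ring
  have e3 : (q + q⁻¹)⁻¹ * q = q ^ 2 * (1 + q ^ 2)⁻¹ := by
    rw [show (q + q⁻¹)⁻¹ * q = (q⁻¹ * (q + q⁻¹))⁻¹ by rw [mul_inv, inv_inv]; exact mul_comm _ _,
      show q ^ 2 * (1 + q ^ 2)⁻¹ = ((1 + q ^ 2) * (q ^ 2)⁻¹)⁻¹ by rw [mul_inv, inv_inv]; exact mul_comm _ _]
    congr 1
    field_simp
    ring
  have hPp : Pp = (1 + q ^ 2)⁻¹ • 1 + (q * (1 + q ^ 2)⁻¹) • R := by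
    show (q + q⁻¹)⁻¹ • (q⁻¹ • 1 + R) = _
    rw [smul_add, smul_smul, e1, e2]
  have hPm : Pm = (q ^ 2 * (1 + q ^ 2)⁻¹) • 1 + (-(q * (1 + q ^ 2)⁻¹)) • R := by
    show (q + q⁻¹)⁻¹ • (q • 1 - R) = _
    rw [smul_sub, smul_smul, e3, e2, sub_eq_add_neg, ← neg_smul]
  clear_value Pp Pm R
  clear hc hq2 hN
  refine ⟨?_, ?_, ?_, ?_, ?_, ?_⟩
  · rw [hPp, expand]
    match_scalars <;> field_simp [h1, h2] <;> ring
  · rw [hPm, expand]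
    match_scalars <;> field_simp [h1, h2] <;> ring
  · rw [hPp, hPm, expand]
    match_scalars <;> field_simp [h1, h2] <;> ring
  · rw [hPm, hPp, expand]
    match_scalars <;> field_simp [h1, h2] <;> ring
  · rw [hPp, hPm]
    match_scalars <;> field_simp [h1, h2] <;> ring
  · rw [hPp, hPm]
    match_scalars <;> field_simp [h1, h2] <;> ring
end

section
/- Define N²×N² matrices by (Rre⁺)^{ab}_{rs} = R̂^{ra}_{sb}, (Rre⁻)^{ab}_{rs} = (R̂⁻¹)^{ra}_{sb}, (R̀⁺)^{ab}_{rs} = q^{2s−2a}·R̂^{bs}_{ar}, and (R̀⁻)^{ab}_{rs} = q^{2s−2a}·(R̂⁻¹)^{bs}_{ar}, where R̂⁻¹ = R̂ − (q − q⁻¹)·I_{N²}. Then Rre⁺·R̀⁻ = R̀⁻·Rre⁺ = I_{N²} and Rre⁻·R̀⁺ = R̀⁺·Rre⁻ = I_{N²}. -/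
/-- `(Rre⁺)^{ab}_{rs} = R̂^{ra}_{sb}`. -/
noncomputable def RreP (N : ℕ) (q : ℂ) : Matrix (Fin N × Fin N) (Fin N × Fin N) ℂ :=
  fun p c => Rhat N q (c.1, p.1) (c.2, p.2)

/-- `(Rre⁻)^{ab}_{rs} = (R̂⁻¹)^{ra}_{sb}` where `R̂⁻¹ = R̂ − (q − q⁻¹)·I`. -/
noncomputable def RreM (N : ℕ) (q : ℂ) : Matrix (Fin N × Fin N) (Fin N × Fin N) ℂ :=
  fun p c => (Rhat N q - (q - q⁻¹) • 1) (c.1, p.1) (c.2, p.2)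

/-- `(R̀⁺)^{ab}_{rs} = q^{2s−2a} R̂^{bs}_{ar}`. -/
noncomputable def RgraveP (N : ℕ) (q : ℂ) : Matrix (Fin N × Fin N) (Fin N × Fin N) ℂ :=
  fun p c => q ^ (2 * (c.2 : ℤ) - 2 * (p.1 : ℤ)) * Rhat N q (p.2, c.2) (p.1, c.1)

/-- `(R̀⁻)^{ab}_{rs} = q^{2s−2a} (R̂⁻¹)^{bs}_{ar}` where `R̂⁻¹ = R̂ − (q − q⁻¹)·I`. -/
noncomputable def RgraveM (N : ℕ) (q : ℂ) : Matrix (Fin N × Fin N) (Fin N × Fin N) ℂ :=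
  fun p c => q ^ (2 * (c.2 : ℤ) - 2 * (p.1 : ℤ)) * (Rhat N q - (q - q⁻¹) • 1) (p.2, c.2) (p.1, c.1)

/-!
All four matrices preserve the span of the vectors `e_(a,a)` and act on the other basis vectors
`e_(a,b)`, `a ≠ b`, by the flip `e_(a,b) ↦ e_(b,a)`. Flips square to the identity, so each
identity reduces to an `N × N` one on the diagonal block. There `Rre⁺` is the lower triangular
matrix `q δ_ar + (q - q⁻¹) [r < a]`, and `R̀⁻` is its inverse because the column sums of `R̀⁻`
telescope. The blocks of `Rre⁻` and `R̀⁺` are the transposes of those of `Rre⁺` and `R̀⁻` at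
`q⁻¹`.
-/

open Finset Matrix

section SwapBlock

variable {n R : Type*} [Fintype n] [DecidableEq n] [NonAssocSemiring R]

def swapBlock (D : Matrix n n R) : Matrix (n × n) (n × n) R :=
  of fun p c => if p.1 = p.2 then (if c.1 = c.2 then D p.1 c.1 else 0)
    else if c = p.swap then 1 else 0

theorem swapBlock_mul_apply_of_eq (D : Matrix n n R) (a : n) (B : Matrix (n × n) (n × n) R)
    (c : n × n) : (swapBlock D * B) (a, a) c = ∑ x, D a x * B (x, x) c := by
  simp [swapBlock, mul_apply, Fintype.sum_prod_type, ite_mul]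

theorem swapBlock_mul_apply_of_ne (D : Matrix n n R) {a b : n} (hab : a ≠ b)
    (B : Matrix (n × n) (n × n) R) (c : n × n) : (swapBlock D * B) (a, b) c = B (b, a) c := by
  simp [swapBlock, mul_apply, hab, ite_mul]

theorem swapBlock_mul_swapBlock {D E : Matrix n n R} (h : D * E = 1) :
    swapBlock D * swapBlock E = 1 := by
  ext ⟨a, b⟩ ⟨r, s⟩
  rcases eq_or_ne a b with rfl | hab
  · rw [swapBlock_mul_apply_of_eq]
    rcases eq_or_ne r s with rfl | hrs
    · simpa [swapBlock, one_apply, mul_apply] using congrFun (congrFun h a) r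
    · have hne : ¬(a = r ∧ a = s) := fun h ↦ hrs (h.1.symm.trans h.2)
      simp [swapBlock, one_apply, hrs, hne]
  · rw [swapBlock_mul_apply_of_ne D hab]
    simp only [swapBlock, one_apply, of_apply, Ne.symm hab, if_false, Prod.swap_prod_mk,
      Prod.mk.injEq, eq_comm]

end SwapBlock

section Triangular

variable {K : Type*} [Field K] {N : ℕ}

def lowerR (N : ℕ) (q : K) : Matrix (Fin N) (Fin N) K :=
  of fun a r => (if a = r then q else 0) + if r < a then q - q⁻¹ else 0

def lowerRInv (N : ℕ) (q : K) : Matrix (Fin N) (Fin N) K :=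
  of fun a r => (if a = r then q⁻¹ else 0) -
    if r < a then (q - q⁻¹) * q ^ (2 * (r : ℤ) - 2 * a) else 0

theorem lowerR_mul_apply (q : K) (B : Matrix (Fin N) (Fin N) K) (a c : Fin N) :
    (lowerR N q * B) a c = q * B a c + (q - q⁻¹) * ∑ r ∈ Iio a, B r c := by
  simp [lowerR, mul_apply, add_mul, sum_add_distrib, ite_mul, mul_sum, ← sum_filter,
    filter_gt_eq_Iio]

theorem sum_range_lowerRInv_entry (q : K) (hq : q ≠ 0) (c : ℕ) {m : ℕ} (hm : c < m) :
    ∑ i ∈ range m, ((if i = c then q⁻¹ else 0) -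
      if c < i then (q - q⁻¹) * q ^ (2 * (c : ℤ) - 2 * i) else 0) =
      q ^ (1 + 2 * (c : ℤ) - 2 * m) := by
  induction m, hm using Nat.le_induction with
  | base =>
    have hexp : (1 + 2 * (c : ℤ) - 2 * (c + 1 : ℕ)) = -1 := by push_cast; ring
    rw [sum_sub_distrib, sum_ite_eq',
      sum_ite_of_false fun i hi ↦ (mem_range_succ_iff.1 hi).not_gt, hexp]
    simp
  | succ m hcm ih =>
    replace hcm : c < m := hcm
    rw [sum_range_succ, ih, if_neg hcm.ne', if_pos hcm]
    have h₁ : (1 + 2 * (c : ℤ) - 2 * m) = (2 * c - 2 * m) + 1 := by ring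
    have h₂ : (1 + 2 * (c : ℤ) - 2 * (m + 1 : ℕ)) = (2 * c - 2 * m) - 1 := by push_cast; ring
    rw [h₁, h₂, zpow_add_one₀ hq, zpow_sub_one₀ hq]
    ring

theorem sum_Iio_lowerRInv_of_lt (q : K) (hq : q ≠ 0) {a c : Fin N} (hca : c < a) :
    ∑ r ∈ Iio a, lowerRInv N q r c = q ^ (1 + 2 * (c : ℤ) - 2 * a) := by
  rw [← sum_range_lowerRInv_entry q hq c hca, ← Nat.Iio_eq_range, ← Fin.map_valEmbedding_Iio,
    sum_map]
  refine sum_congr rfl fun r _ ↦ ?_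
  simp only [lowerRInv, of_apply, Fin.valEmbedding_apply, Fin.val_inj, Fin.val_fin_lt]

theorem sum_Iio_lowerRInv_of_le (q : K) {a c : Fin N} (hac : a ≤ c) :
    ∑ r ∈ Iio a, lowerRInv N q r c = 0 :=
  sum_eq_zero fun r hr ↦ by
    have hrc := (mem_Iio.1 hr).trans_le hac
    simp [lowerRInv, hrc.ne, hrc.not_gt]

theorem lowerR_mul_lowerRInv (q : K) (hq : q ≠ 0) : lowerR N q * lowerRInv N q = 1 := by
  ext a c
  rw [lowerR_mul_apply, one_apply]
  rcases lt_trichotomy c a with hca | rfl | hac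
  · rw [sum_Iio_lowerRInv_of_lt q hq hca]
    simp only [lowerRInv, of_apply, if_neg hca.ne', if_pos hca, add_sub_assoc,
      zpow_one_add₀ hq]
    ring
  · rw [sum_Iio_lowerRInv_of_le q le_rfl]
    simp [lowerRInv, hq]
  · rw [sum_Iio_lowerRInv_of_le q hac.le]
    simp [lowerRInv, hac.ne, hac.not_gt]

end Triangular

theorem RreP_eq_swapBlock (N : ℕ) (q : ℂ) : RreP N q = swapBlock (lowerR N q) := by
  ext ⟨a, b⟩ ⟨r, s⟩
  simp only [RreP, Rhat, swapBlock, lowerR, of_apply, Prod.swap_prod_mk, Prod.mk.injEq]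
  split_ifs <;> grind

theorem RreM_eq_swapBlock (N : ℕ) (q : ℂ) : RreM N q = swapBlock (lowerR N q⁻¹)ᵀ := by
  ext ⟨a, b⟩ ⟨r, s⟩
  simp only [RreM, Rhat, swapBlock, lowerR, of_apply, transpose_apply, Prod.swap_prod_mk,
    Prod.mk.injEq, Matrix.sub_apply, Matrix.smul_apply, one_apply, smul_eq_mul, inv_inv]
  split_ifs <;> grind

theorem RgraveM_eq_swapBlock (N : ℕ) (q : ℂ) : RgraveM N q = swapBlock (lowerRInv N q) := by
  ext ⟨a, b⟩ ⟨r, s⟩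
  simp only [RgraveM, Rhat, swapBlock, lowerRInv, of_apply, Prod.swap_prod_mk, Prod.mk.injEq,
    Matrix.sub_apply, Matrix.smul_apply, one_apply, smul_eq_mul]
  rcases eq_or_ne a b with rfl | hab
  · rcases eq_or_ne r s with rfl | hrs
    · rcases lt_trichotomy r a with h | rfl | h
      · simp [h, h.ne, h.ne', h.not_gt]
        ring
      · simp
      · simp [h, h.ne, h.ne', h.not_gt]
    · split_ifs <;> grind
  · rcases eq_or_ne s a with rfl | hsa
    · simp only [sub_self, zpow_zero, one_mul]
      split_ifs <;> grind
    · split_ifs <;> grind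

theorem RgraveP_eq_swapBlock (N : ℕ) (q : ℂ) :
    RgraveP N q = swapBlock (lowerRInv N q⁻¹)ᵀ := by
  ext ⟨a, b⟩ ⟨r, s⟩
  simp only [RgraveP, Rhat, swapBlock, lowerRInv, of_apply, transpose_apply, Prod.swap_prod_mk,
    Prod.mk.injEq, inv_inv, _root_.inv_zpow']
  rcases eq_or_ne a b with rfl | hab
  · rcases eq_or_ne r s with rfl | hrs
    · rcases lt_trichotomy r a with h | rfl | h
      · simp [h.ne, h.ne', h.not_gt]
      · simp
      · simp [h, h.ne, h.ne']
        ring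
    · split_ifs <;> grind
  · rcases eq_or_ne s a with rfl | hsa
    · simp only [sub_self, zpow_zero, one_mul]
      split_ifs <;> grind
    · split_ifs <;> grind

theorem Rre_Rgrave_inverse_general (N : ℕ) (q : ℂ) (hq : q ≠ 0) :
    RreP N q * RgraveM N q = 1 ∧ RgraveM N q * RreP N q = 1 ∧
    RreM N q * RgraveP N q = 1 ∧ RgraveP N q * RreM N q = 1 := by
  have hblock : lowerR N q * lowerRInv N q = 1 := lowerR_mul_lowerRInv q hq
  have hblock' : (lowerR N q⁻¹)ᵀ * (lowerRInv N q⁻¹)ᵀ = 1 := by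
    rw [← transpose_mul, mul_eq_one_comm.mp (lowerR_mul_lowerRInv q⁻¹ (inv_ne_zero hq)),
      transpose_one]
  have hP : RreP N q * RgraveM N q = 1 := by
    rw [RreP_eq_swapBlock, RgraveM_eq_swapBlock]
    exact swapBlock_mul_swapBlock hblock
  have hM : RreM N q * RgraveP N q = 1 := by
    rw [RreM_eq_swapBlock, RgraveP_eq_swapBlock]
    exact swapBlock_mul_swapBlock hblock'
  exact ⟨hP, mul_eq_one_comm.mp hP, hM, mul_eq_one_comm.mp hM⟩

/-- `Rre⁺ · R̀⁻ = R̀⁻ · Rre⁺ = I` and `Rre⁻ · R̀⁺ = R̀⁺ · Rre⁻ = I`. -/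
theorem Rre_Rgrave_inverse (N : ℕ) (hN : 1 ≤ N) (q : ℂ) (hq : q ≠ 0) :
    RreP N q * RgraveM N q = 1 ∧ RgraveM N q * RreP N q = 1 ∧
    RreM N q * RgraveP N q = 1 ∧ RgraveP N q * RreM N q = 1 :=
  Rre_Rgrave_inverse_general N q hq
end
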